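/- arXiv:2605.24419 — 12 statements merged into one kernel-verified Lean document; each statement's English description precedes it below -/
import Mathlib

section
/- For every τ ∈ ℝ and every q ∈ ℝᴺ, the 1×1 matrix X (I₃ ⊗ M) Xᵀ equals 6·qᵀ(τΣ₁ + (τ³/6)Σ₂ + (13τ⁵/360)Σ₃)q, where M := (I₂ ⊗ qᵀ) Qˣ (I₂ ⊗ q) is a 2×2 matrix and X is the 1×6 row matrix [C(A² − 3A + 3I₂), C(A − 3I₂), C]. -/
/-!
Writing `X = [u₁ u₂ u₃]`, the form `X (I₃ ⊗ M) Xᵀ` is `∑ₖ uₖ M uₖᵀ`, where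
`u₁ = C(A² - 3A + 3I) = [1, -τ]`, `u₂ = C(A - 3I) = [-2, τ]` and `u₃ = C = [1, 0]`; so it equals
`6 m₁₁ - 6τ m₁₂ + 2τ² m₂₂`, and the mixed-product rule for `⊗` gives `mᵢⱼ = qᵀ Qˣᵢⱼ q`.
Substituting the blocks of `Qˣ`, the coefficients of `τ³ qᵀΣ₂q` and `τ⁵ qᵀΣ₃q` become
`2 - 3 + 2 = 1` and `3/10 - 3/4 + 2/3 = 13/60`.
-/

open Matrix Kronecker

section
variable {R : Type*} [CommRing R]

theorem replicateRow_mul_mul_replicateCol {n ι : Type*} [Fintype n] (q : n → R)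
    (G : Matrix n n R) :
    replicateRow ι q * G * replicateCol ι q = of fun _ _ => q ⬝ᵥ G *ᵥ q := by
  rw [Matrix.mul_assoc, ← replicateCol_mulVec, replicateRow_mul_replicateCol]

theorem one_kronecker_replicateRow_mul_kronecker_mul {l n ι : Type*} [Fintype l] [DecidableEq l]
    [Fintype n] (q : n → R) (E : Matrix l l R) (G : Matrix n n R) :
    ((1 : Matrix l l R) ⊗ₖ replicateRow ι q) * (E ⊗ₖ G) *
        ((1 : Matrix l l R) ⊗ₖ replicateCol ι q) =
      E ⊗ₖ of fun _ _ => q ⬝ᵥ G *ᵥ q := by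
  rw [← mul_kronecker_mul, ← mul_kronecker_mul, Matrix.one_mul, Matrix.mul_one,
    replicateRow_mul_mul_replicateCol]

theorem blockRow_mul_one_kronecker_mul_transpose {m n κ : Type*} [Fintype n] [Fintype κ]
    [DecidableEq κ] (B : κ → Matrix m n R) (M : Matrix n n R) :
    of (fun i (kj : κ × n) => B kj.1 i kj.2) * ((1 : Matrix κ κ R) ⊗ₖ M) *
        (of fun i (kj : κ × n) => B kj.1 i kj.2)ᵀ =
      ∑ k, B k * M * (B k)ᵀ := by
  ext i i'
  simp [mul_apply, Fintype.sum_prod_type, one_apply, Matrix.sum_apply]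

theorem row_mul_mul_transpose_fin_two (x y : R) (M : Matrix (Fin 2) (Fin 2) R) :
    !![x, y] * M * !![x, y]ᵀ =
      !![x * x * M 0 0 + x * y * (M 0 1 + M 1 0) + y * y * M 1 1] := by
  ext i j
  simp only [mul_apply, Fin.sum_univ_two, transpose_apply, of_apply, cons_val', cons_val_zero,
    cons_val_one, cons_val_fin_one]
  ring

end

/-- Equation (14) of the paper: the Hadamard-variance identity
`X (I₃ ⊗ M) Xᵀ = 6 · qᵀ (τΣ₁ + (τ³/6)Σ₂ + (13τ⁵/360)Σ₃) q`,
where `M = (I₂ ⊗ qᵀ) Qˣ (I₂ ⊗ q)`. -/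
theorem stmt_1 (N : ℕ) (τ : ℝ) (q : Fin N → ℝ)
    (S1 S2 S3 : Matrix (Fin N) (Fin N) ℝ)
    (A : Matrix (Fin 2) (Fin 2) ℝ) (hA : A = !![1, τ; 0, 1])
    (C : Matrix (Fin 1) (Fin 2) ℝ) (hC : C = !![1, 0])
    (qrow : Matrix (Fin 1) (Fin N) ℝ) (hqrow : qrow = Matrix.of (fun _ j => q j))
    (qcol : Matrix (Fin N) (Fin 1) ℝ) (hqcol : qcol = Matrix.of (fun j _ => q j))
    (Qx : Matrix (Fin 2 × Fin N) (Fin 2 × Fin N) ℝ)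
    (hQx : Qx = !![(1:ℝ), 0; 0, 0] ⊗ₖ (τ • S1 + (τ^3/3) • S2 + (τ^5/20) • S3)
        + !![(0:ℝ), 1; 0, 0] ⊗ₖ ((τ^2/2) • S2 + (τ^4/8) • S3)
        + !![(0:ℝ), 0; 1, 0] ⊗ₖ ((τ^2/2) • S2 + (τ^4/8) • S3)
        + !![(0:ℝ), 0; 0, 1] ⊗ₖ (τ • S2 + (τ^3/3) • S3))
    (M : Matrix (Fin 2) (Fin 2) ℝ)
    (hM : M = Matrix.of (fun i j =>
      (((1 : Matrix (Fin 2) (Fin 2) ℝ) ⊗ₖ qrow) * Qx *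
        ((1 : Matrix (Fin 2) (Fin 2) ℝ) ⊗ₖ qcol)) (i, 0) (j, 0)))
    (X : Matrix (Fin 1) (Fin 3 × Fin 2) ℝ)
    (hX : X = Matrix.of (fun i jp =>
      ![C * (A * A - (3:ℝ) • A + (3:ℝ) • 1), C * (A - (3:ℝ) • 1), C] jp.1 i jp.2)) :
    X * ((1 : Matrix (Fin 3) (Fin 3) ℝ) ⊗ₖ M) * Xᵀ =
      Matrix.of (fun _ _ =>
        6 * (q ⬝ᵥ ((τ • S1 + (τ^3/6) • S2 + (13*τ^5/360) • S3) *ᵥ q))) := by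
  obtain ⟨a, ha⟩ : ∃ a, q ⬝ᵥ S1 *ᵥ q = a := ⟨_, rfl⟩
  obtain ⟨b, hb⟩ : ∃ b, q ⬝ᵥ S2 *ᵥ q = b := ⟨_, rfl⟩
  obtain ⟨c, hc⟩ : ∃ c, q ⬝ᵥ S3 *ᵥ q = c := ⟨_, rfl⟩
  have hqrow' : qrow = replicateRow (Fin 1) q := hqrow
  have hqcol' : qcol = replicateCol (Fin 1) q := hqcol
  have hM' : M = !![τ * a + τ^3/3 * b + τ^5/20 * c, τ^2/2 * b + τ^4/8 * c;
                    τ^2/2 * b + τ^4/8 * c, τ * b + τ^3/3 * c] := by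
    simp only [hM, hQx, hqrow', hqcol', Matrix.mul_add, Matrix.add_mul,
      one_kronecker_replicateRow_mul_kronecker_mul, add_mulVec, smul_mulVec, dotProduct_add,
      dotProduct_smul, smul_eq_mul, ha, hb, hc]
    ext i j
    fin_cases i <;> fin_cases j <;> simp
  have hu₁ : C * (A * A - (3:ℝ) • A + (3:ℝ) • 1) = !![1, -τ] := by
    rw [hA, hC]
    ext i j; fin_cases i; fin_cases j
    · norm_num [mul_apply]
    · norm_num [mul_apply]; ring
  have hu₂ : C * (A - (3:ℝ) • 1) = !![-2, τ] := by
    rw [hA, hC]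
    ext i j; fin_cases i; fin_cases j <;> norm_num [mul_apply]
  rw [hX, blockRow_mul_one_kronecker_mul_transpose, Fin.sum_univ_three]
  simp only [cons_val_zero, cons_val_one, cons_val_two, tail_cons, head_cons]
  rw [hu₁, hu₂, hC, row_mul_mul_transpose_fin_two, row_mul_mul_transpose_fin_two,
    row_mul_mul_transpose_fin_two, hM']
  ext i j
  simp only [Matrix.add_apply, of_apply, cons_val', cons_val_zero, cons_val_one, cons_val_fin_one,
    add_mulVec, smul_mulVec, dotProduct_add, dotProduct_smul, smul_eq_mul, ha, hb, hc]
  ring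
end

section
/- Let Σ₁ be an N×N diagonal matrix with strictly positive diagonal entries and Σ₂, Σ₃ be N×N diagonal matrices with nonnegative diagonal entries. For τ > 0 the matrix Π(τ) := τΣ₁ + (τ³/6)Σ₂ + (13τ⁵/360)Σ₃ is positive definite, and the weight vector q_H(τ) := Π(τ)⁻¹1 / (1ᵀΠ(τ)⁻¹1) converges, as τ → 0⁺, to Σ₁⁻¹1 / (1ᵀΣ₁⁻¹1). -/
open Matrix

/-- Equation (29) of the paper: `Π(τ)` is positive definite for `τ > 0` and the optimal
weight vector `q_H(τ)` converges, as `τ → 0⁺`, to `Σ₁⁻¹1 / (1ᵀΣ₁⁻¹1)`. -/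
theorem stmt_3 (N : ℕ) (s1 s2 s3 : Fin N → ℝ)
    (hs1 : ∀ i, 0 < s1 i) (hs2 : ∀ i, 0 ≤ s2 i) (hs3 : ∀ i, 0 ≤ s3 i)
    (one : Fin N → ℝ) (hone : one = fun _ => 1)
    (S1 S2 S3 : Matrix (Fin N) (Fin N) ℝ)
    (hS1 : S1 = Matrix.diagonal s1) (hS2 : S2 = Matrix.diagonal s2)
    (hS3 : S3 = Matrix.diagonal s3)
    (Pi : ℝ → Matrix (Fin N) (Fin N) ℝ)
    (hPi : ∀ τ, Pi τ = τ • S1 + (τ^3/6) • S2 + (13*τ^5/360) • S3)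
    (qH : ℝ → Fin N → ℝ)
    (hqH : ∀ τ, qH τ = (one ⬝ᵥ ((Pi τ)⁻¹ *ᵥ one))⁻¹ • ((Pi τ)⁻¹ *ᵥ one)) :
    (∀ τ : ℝ, 0 < τ → (Pi τ).PosDef) ∧
    Filter.Tendsto qH (nhdsWithin 0 (Set.Ioi 0))
      (nhds ((one ⬝ᵥ (S1⁻¹ *ᵥ one))⁻¹ • (S1⁻¹ *ᵥ one))) := by
  set e : ℝ → Fin N → ℝ := fun τ i => s1 i + τ^2/6 * s2 i + 13*τ^4/360 * s3 i with he
  have hepos : ∀ τ i, 0 < e τ i := by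
    intro τ i
    have h1 := hs1 i; have h2 := hs2 i; have h3 := hs3 i
    simp only [he]
    positivity
  have hdiaginv : ∀ (d : Fin N → ℝ), (∀ i, d i ≠ 0) →
      (Matrix.diagonal d)⁻¹ = Matrix.diagonal (fun i => (d i)⁻¹) := by
    intro d hd
    apply Matrix.inv_eq_right_inv
    rw [Matrix.diagonal_mul_diagonal]
    have : (fun i => d i * (d i)⁻¹) = fun _ : Fin N => (1:ℝ) := by
      funext i; exact mul_inv_cancel₀ (hd i)
    rw [this, Matrix.diagonal_one]
  have hPid : ∀ τ : ℝ, Pi τ = Matrix.diagonal (fun i => τ * e τ i) := by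
    intro τ
    rw [hPi, hS1, hS2, hS3]
    ext i j
    by_cases h : i = j
    · subst h
      simp [Matrix.diagonal_apply_eq, he]
      ring
    · simp [Matrix.diagonal_apply_ne _ h, h]
  have hpd : ∀ τ : ℝ, 0 < τ → (Pi τ).PosDef := by
    intro τ hτ
    rw [hPid τ, Matrix.posDef_diagonal_iff]
    exact fun i => mul_pos hτ (hepos τ i)
  refine ⟨hpd, ?_⟩
  have hkey : ∀ τ : ℝ, 0 < τ →
      qH τ = fun i => (∑ j, (e τ j)⁻¹)⁻¹ * (e τ i)⁻¹ := by
    intro τ hτ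
    funext i
    rw [hqH, hPid, hdiaginv _ (fun i => (mul_pos hτ (hepos τ i)).ne')]
    simp only [hone, _root_.Pi.smul_apply, smul_eq_mul, Matrix.mulVec_diagonal, mul_one,
      dotProduct, one_mul, mul_inv]
    rw [← Finset.mul_sum, mul_inv, inv_inv]
    have hτ' : τ ≠ 0 := ne_of_gt hτ
    have hei : e τ i ≠ 0 := (hepos τ i).ne'
    have hS0 : (∑ j, (e τ j)⁻¹) ≠ 0 :=
      (Finset.sum_pos (fun j _ => inv_pos.mpr (hepos τ j)) ⟨i, Finset.mem_univ i⟩).ne'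
    rw [mul_mul_mul_comm, mul_inv_cancel₀ hτ', one_mul]
  have hkey0 : ((one ⬝ᵥ (S1⁻¹ *ᵥ one))⁻¹ • (S1⁻¹ *ᵥ one))
      = fun i => (∑ j, (s1 j)⁻¹)⁻¹ * (s1 i)⁻¹ := by
    funext i
    rw [hS1, hdiaginv _ (fun i => (hs1 i).ne')]
    simp only [hone, _root_.Pi.smul_apply, smul_eq_mul, Matrix.mulVec_diagonal, mul_one,
      dotProduct, one_mul]
  rw [hkey0]
  have hcont : ∀ j, Continuous (fun τ => (e τ j)⁻¹) := by
    intro j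
    refine Continuous.inv₀ (by fun_prop) (fun τ => (hepos τ j).ne')
  have htend : Filter.Tendsto (fun τ => fun i => (∑ j, (e τ j)⁻¹)⁻¹ * (e τ i)⁻¹)
      (nhdsWithin 0 (Set.Ioi 0)) (nhds (fun i => (∑ j, (s1 j)⁻¹)⁻¹ * (s1 i)⁻¹)) := by
    rw [tendsto_pi_nhds]
    intro i
    have h0 : ∀ j, e 0 j = s1 j := by intro j; simp [he]
    have hc : Continuous (fun τ => (∑ j, (e τ j)⁻¹)⁻¹ * (e τ i)⁻¹) := by
      refine Continuous.mul (Continuous.inv₀ (by continuity) ?_) (hcont i)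
      intro τ
      exact (Finset.sum_pos (fun j _ => inv_pos.mpr (hepos τ j)) ⟨i, Finset.mem_univ i⟩).ne'
    have := (hc.tendsto 0).mono_left (nhdsWithin_le_nhds (s := Set.Ioi (0:ℝ)))
    simpa [h0] using this
  refine htend.congr' ?_
  filter_upwards [self_mem_nhdsWithin] with τ hτ
  exact (hkey τ hτ).symm
end

section
/- Let 1 ≤ M < N and let Σ₁ = diag(σ₁₁²,…,σ₁ₙ²), Σ₂ = diag(σ₂₁²,…,σ₂ₙ²), Σ₃ = diag(0,…,0, σ₃,ₙ₋ₘ₊₁²,…,σ₃ₙ²) be N×N diagonal matrices with σ₁ᵢ > 0 and σ₂ᵢ > 0 for all i, σ₃ⱼ > 0 for j > N−M, and the first N−M diagonal entries of Σ₃ equal to zero. Then the weight vector q_H(τ) := Π(τ)⁻¹1 / (1ᵀΠ(τ)⁻¹1), where Π(τ) := τΣ₁ + (τ³/6)Σ₂ + (13τ⁵/360)Σ₃, converges as τ → ∞ to the vector whose first N−M entries are σ₂ᵢ⁻² / (∑_{j=1}^{N−M} σ₂ⱼ⁻²) and whose last M entries are 0. -/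
/-!
For `τ > 0` the matrix `Π(τ)` is diagonal with entries `dᵢ(τ) = σ₁ᵢ² τ + σ₂ᵢ² τ³/6 + 13 σ₃ᵢ² τ⁵/360`,
so `q_H(τ)` is the vector `(dᵢ(τ)⁻¹)ᵢ` rescaled to total weight one. Rescaling is invariant under
multiplying the vector by `τ³`, and `τ³ / dᵢ(τ)` tends to `6 / σ₂ᵢ²` for a cesium-type clock
(`σ₃ᵢ = 0`) and to `0` for a hydrogen-maser-type clock (`σ₃ᵢ > 0`). Since there is at least one
cesium-type clock the limit has positive total weight, so rescaling commutes with the limit.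
-/

open Matrix

open Filter Topology

section NormalizeSum

variable {ι : Type*} [Fintype ι]

noncomputable def normalizeSum (w : ι → ℝ) : ι → ℝ := (∑ j, w j)⁻¹ • w

lemma normalizeSum_smul {c : ℝ} (hc : c ≠ 0) (w : ι → ℝ) :
    normalizeSum (c • w) = normalizeSum w := by
  simp only [normalizeSum, Pi.smul_apply, smul_eq_mul, ← Finset.mul_sum, smul_smul,
    _root_.mul_inv_rev, inv_mul_cancel_right₀ hc]

lemma normalizeSum_ite (p : ι → Prop) [DecidablePred p] (f : ι → ℝ) :
    normalizeSum (fun i => if p i then f i else 0) =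
      fun i => if p i then f i / ∑ j ∈ Finset.univ.filter p, f j else 0 := by
  funext i
  simp only [normalizeSum, Pi.smul_apply, smul_eq_mul, ← Finset.sum_filter]
  split_ifs <;> simp [div_eq_inv_mul]

lemma Filter.Tendsto.normalizeSum {α : Type*} {l : Filter α} {w : α → ι → ℝ} {L : ι → ℝ}
    (hw : Tendsto w l (𝓝 L)) (hL : ∑ j, L j ≠ 0) :
    Tendsto (fun x => _root_.normalizeSum (w x)) l (𝓝 (_root_.normalizeSum L)) :=
  ((tendsto_finsetSum _ fun j _ => (continuous_apply j).continuousAt.tendsto.comp hw).inv₀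
    hL).smul hw

lemma inv_diagonal_mulVec_one [DecidableEq ι] {d : ι → ℝ} (hd : ∀ i, d i ≠ 0) :
    (diagonal d)⁻¹ *ᵥ 1 = d⁻¹ := by
  have hinv : (diagonal d)⁻¹ = diagonal d⁻¹ := inv_eq_right_inv (by simp [hd])
  ext i
  simp [hinv, mulVec_diagonal]

lemma one_dotProduct_inv_diagonal_mulVec_one_inv_smul [DecidableEq ι] {d : ι → ℝ}
    (hd : ∀ i, d i ≠ 0) :
    (1 ⬝ᵥ ((diagonal d)⁻¹ *ᵥ 1))⁻¹ • ((diagonal d)⁻¹ *ᵥ 1) = normalizeSum d⁻¹ := by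
  rw [inv_diagonal_mulVec_one hd, one_dotProduct, normalizeSum]

lemma tendsto_pow_three_div_cubic (a : ℝ) {b : ℝ} (hb : b ≠ 0) :
    Tendsto (fun τ : ℝ => τ ^ 3 / (a * τ + b * τ ^ 3)) atTop (𝓝 b⁻¹) := by
  have hinner : Tendsto (fun τ : ℝ => a / τ ^ 2 + b) atTop (𝓝 b) := by
    simpa using (tendsto_const_nhds.div_atTop (tendsto_pow_atTop two_ne_zero)).add_const b
  refine (hinner.inv₀ hb).congr' ?_
  filter_upwards [eventually_gt_atTop 0] with τ hτ
  rw [show a / τ ^ 2 + b = (a * τ + b * τ ^ 3) / τ ^ 3 by field_simp, inv_div]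

lemma tendsto_pow_three_div_quintic_of_pos (a b : ℝ) {c : ℝ} (hc : 0 < c) :
    Tendsto (fun τ : ℝ => τ ^ 3 / (a * τ + b * τ ^ 3 + c * τ ^ 5)) atTop (𝓝 0) := by
  have hinner : Tendsto (fun τ : ℝ => a / τ ^ 2 + b + c * τ ^ 2) atTop atTop :=
    ((tendsto_const_nhds.div_atTop (tendsto_pow_atTop two_ne_zero)).add_const b).add_atTop
      ((tendsto_pow_atTop two_ne_zero).const_mul_atTop hc)
  refine hinner.inv_tendsto_atTop.congr' ?_
  filter_upwards [eventually_gt_atTop 0] with τ hτ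
  rw [Pi.inv_apply, show a / τ ^ 2 + b + c * τ ^ 2 = (a * τ + b * τ ^ 3 + c * τ ^ 5) / τ ^ 3 by
    field_simp, inv_div]

lemma tendsto_normalizeSum_inv_odd_quintic {a b c : ι → ℝ} (hb : ∀ i, 0 < b i)
    (hc : ∀ i, 0 ≤ c i) (hc0 : ∃ i, c i = 0) :
    Tendsto (fun τ : ℝ => normalizeSum fun i => (a i * τ + b i * τ ^ 3 + c i * τ ^ 5)⁻¹) atTop
      (𝓝 (normalizeSum fun i => if c i = 0 then (b i)⁻¹ else 0)) := by
  have hlim : Tendsto (fun τ : ℝ => τ ^ 3 • fun i => (a i * τ + b i * τ ^ 3 + c i * τ ^ 5)⁻¹)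
      atTop (𝓝 fun i => if c i = 0 then (b i)⁻¹ else 0) := by
    refine tendsto_pi_nhds.2 fun i => ?_
    simp only [Pi.smul_apply, smul_eq_mul, ← div_eq_mul_inv]
    split_ifs with hci
    · simpa [hci] using tendsto_pow_three_div_cubic (a i) (hb i).ne'
    · exact tendsto_pow_three_div_quintic_of_pos _ _ ((hc i).lt_of_ne' hci)
  have hsum : ∑ i, (if c i = 0 then (b i)⁻¹ else 0) ≠ 0 := by
    obtain ⟨i₀, hi₀⟩ := hc0
    refine (Finset.sum_pos' (fun i _ => ?_) ⟨i₀, Finset.mem_univ _, ?_⟩).ne'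
    · have := hb i
      split_ifs <;> positivity
    · have := hb i₀
      simp only [hi₀, if_true]; positivity
  refine (hlim.normalizeSum hsum).congr' ?_
  filter_upwards [eventually_gt_atTop 0] with τ hτ
  exact normalizeSum_smul (pow_ne_zero 3 hτ.ne') _

end NormalizeSum

theorem stmt_4_general (N M : ℕ) (hMN : M < N)
    (s1 s2 s3 : Fin N → ℝ)
    (hs2 : ∀ i, 0 < s2 i)
    (hs3 : ∀ i : Fin N, N - M ≤ (i : ℕ) → 0 < s3 i)
    (one : Fin N → ℝ) (hone : one = fun _ => 1)
    (S1 S2 S3 : Matrix (Fin N) (Fin N) ℝ)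
    (hS1 : S1 = Matrix.diagonal (fun i => (s1 i)^2))
    (hS2 : S2 = Matrix.diagonal (fun i => (s2 i)^2))
    (hS3 : S3 = Matrix.diagonal (fun i => if i.val < N - M then 0 else (s3 i)^2))
    (Pi : ℝ → Matrix (Fin N) (Fin N) ℝ)
    (hPi : ∀ τ, Pi τ = τ • S1 + (τ^3/6) • S2 + (13*τ^5/360) • S3)
    (qH : ℝ → Fin N → ℝ)
    (hqH : ∀ τ, qH τ = (one ⬝ᵥ ((Pi τ)⁻¹ *ᵥ one))⁻¹ • ((Pi τ)⁻¹ *ᵥ one)) :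
    Filter.Tendsto qH Filter.atTop
      (nhds (fun i => if i.val < N - M then
          ((s2 i)^2)⁻¹ /
            (∑ j ∈ Finset.univ.filter (fun j : Fin N => j.val < N - M), ((s2 j)^2)⁻¹)
        else 0)) := by
  obtain rfl : one = 1 := hone
  subst hS1 hS2 hS3
  set c : Fin N → ℝ := fun i => 13 / 360 * if i.val < N - M then 0 else (s3 i) ^ 2 with hc
  have hc_nonneg : ∀ i, 0 ≤ c i := fun i => by simp only [hc]; split_ifs <;> positivity
  have hc_eq_zero : ∀ i, c i = 0 ↔ i.val < N - M := fun i => by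
    have := hs3 i
    simp only [hc]; split_ifs with h
    · simpa using h
    · simpa [h] using (this (not_lt.1 h)).ne'
  have hPi_diag : ∀ τ,
      Pi τ = diagonal fun i => (s1 i) ^ 2 * τ + (s2 i) ^ 2 / 6 * τ ^ 3 + c i * τ ^ 5 := by
    intro τ
    rw [hPi, ← diagonal_smul, ← diagonal_smul, ← diagonal_smul, diagonal_add, diagonal_add]
    congr 1; funext i; simp only [_root_.Pi.smul_apply, smul_eq_mul, hc]; ring
  have hq : ∀ᶠ τ in atTop, (normalizeSum fun i =>
      ((s1 i) ^ 2 * τ + (s2 i) ^ 2 / 6 * τ ^ 3 + c i * τ ^ 5)⁻¹) = qH τ := by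
    filter_upwards [eventually_gt_atTop 0] with τ hτ
    rw [hqH, hPi_diag, one_dotProduct_inv_diagonal_mulVec_one_inv_smul fun i => ?_]
    · rfl
    · have := hs2 i; have := hc_nonneg i
      positivity
  have hlim := tendsto_normalizeSum_inv_odd_quintic (a := fun i => (s1 i) ^ 2)
    (b := fun i => (s2 i) ^ 2 / 6) (fun i => by have := hs2 i; positivity) hc_nonneg
    ⟨_, (hc_eq_zero ⟨0, Nat.zero_lt_of_lt hMN⟩).2 (Nat.sub_pos_of_lt hMN)⟩
  have hL : (fun i => if c i = 0 then ((s2 i) ^ 2 / 6)⁻¹ else 0) =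
      (6 : ℝ) • fun i : Fin N => if i.val < N - M then ((s2 i) ^ 2)⁻¹ else 0 := by
    funext i
    simp only [hc_eq_zero, _root_.Pi.smul_apply, smul_eq_mul]
    split_ifs <;> simp [div_eq_mul_inv, mul_comm]
  rw [hL, normalizeSum_smul (by norm_num), normalizeSum_ite] at hlim
  exact hlim.congr' hq

/-- Equation (30) of the paper: the optimal weight vector `q_H(τ)` converges, as `τ → ∞`,
to the vector putting weight `σ₂ᵢ⁻² / ∑_{j ≤ N−M} σ₂ⱼ⁻²` on each cesium-type clock and
zero weight on every hydrogen-maser-type clock. -/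
theorem stmt_4 (N M : ℕ) (hM : 1 ≤ M) (hMN : M < N)
    (s1 s2 s3 : Fin N → ℝ)
    (hs1 : ∀ i, 0 < s1 i) (hs2 : ∀ i, 0 < s2 i)
    (hs3 : ∀ i : Fin N, N - M ≤ (i : ℕ) → 0 < s3 i)
    (one : Fin N → ℝ) (hone : one = fun _ => 1)
    (S1 S2 S3 : Matrix (Fin N) (Fin N) ℝ)
    (hS1 : S1 = Matrix.diagonal (fun i => (s1 i)^2))
    (hS2 : S2 = Matrix.diagonal (fun i => (s2 i)^2))
    (hS3 : S3 = Matrix.diagonal (fun i => if i.val < N - M then 0 else (s3 i)^2))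
    (Pi : ℝ → Matrix (Fin N) (Fin N) ℝ)
    (hPi : ∀ τ, Pi τ = τ • S1 + (τ^3/6) • S2 + (13*τ^5/360) • S3)
    (qH : ℝ → Fin N → ℝ)
    (hqH : ∀ τ, qH τ = (one ⬝ᵥ ((Pi τ)⁻¹ *ᵥ one))⁻¹ • ((Pi τ)⁻¹ *ᵥ one)) :
    Filter.Tendsto qH Filter.atTop
      (nhds (fun i => if i.val < N - M then
          ((s2 i)^2)⁻¹ /
            (∑ j ∈ Finset.univ.filter (fun j : Fin N => j.val < N - M), ((s2 j)^2)⁻¹)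
        else 0)) :=
  stmt_4_general N M hMN s1 s2 s3 hs2 hs3 one hone S1 S2 S3 hS1 hS2 hS3 Pi hPi qH hqH
end

section
/- Let N ≥ 2, let V ∈ Matrix (Fin (N−1)) (Fin N) ℝ be such that the kernel of the linear map x ↦ Vx equals the span of the all-ones vector 1 ∈ ℝᴺ, let W ∈ Matrix (Fin N) (Fin (N−1)) ℝ have linearly independent columns, let q ∈ ℝᴺ satisfy qᵀW = 0 and qᵀ1 = 1, and set V⁺ := W(VW)⁻¹ (VW is invertible under these hypotheses). Then: (i) V·V⁺ = I_{N−1}; (ii) qᵀV⁺ = 0; and (iii) V⁺·V = I_N − 1·qᵀ, where 1·qᵀ is the rank-one N×N matrix with entries 1ᵢqⱼ. -/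
open Matrix

/-- Properties of the generalized inverse `V⁺ = W(VW)⁻¹` of `V` associated with the
weight vector `q`: `VV⁺ = I`, `qᵀV⁺ = 0` and `V⁺V = I − 1qᵀ`. -/
theorem stmt_6 (N : ℕ) (hN : 2 ≤ N)
    (V : Matrix (Fin (N-1)) (Fin N) ℝ)
    (hV : LinearMap.ker V.mulVecLin = Submodule.span ℝ {(fun _ => 1 : Fin N → ℝ)})
    (W : Matrix (Fin N) (Fin (N-1)) ℝ)
    (hW : LinearIndependent ℝ (fun j : Fin (N-1) => fun i : Fin N => W i j))
    (q : Fin N → ℝ) (hqW : Matrix.vecMul q W = 0)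
    (hq1 : q ⬝ᵥ (fun _ => 1) = 1)
    (Vplus : Matrix (Fin N) (Fin (N-1)) ℝ) (hVplus : Vplus = W * (V * W)⁻¹) :
    V * Vplus = 1 ∧
    Matrix.vecMul q Vplus = 0 ∧
    Vplus * V = 1 - Matrix.of (fun (_ : Fin N) (j : Fin N) => q j) := by
  -- W.mulVec is injective
  have hWinj : ∀ x : Fin (N-1) → ℝ, W.mulVec x = 0 → x = 0 := by
    intro x hx
    have := (Fintype.linearIndependent_iff.mp hW) x ?_
    · funext j; exact this j
    · funext i
      have : (∑ j, x j • fun i : Fin N => W i j) i = W.mulVec x i := by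
        simp [Matrix.mulVec, dotProduct, mul_comm]
      simpa [hx] using this
  -- One vector is in ker V
  have hV1 : V.mulVec (fun _ => 1) = 0 := by
    have : (fun _ => 1 : Fin N → ℝ) ∈ LinearMap.ker V.mulVecLin := by
      rw [hV]; exact Submodule.mem_span_singleton_self _
    simpa using this
  -- VW is a unit
  have hVWinj : Function.Injective (V * W).mulVec := by
    intro x y hxy
    have h0 : (V * W).mulVec (x - y) = 0 := by
      rw [Matrix.mulVec_sub, hxy, sub_self]
    rw [← Matrix.mulVec_mulVec] at h0
    have hker : W.mulVec (x - y) ∈ LinearMap.ker V.mulVecLin := by simpa using h0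
    rw [hV, Submodule.mem_span_singleton] at hker
    obtain ⟨c, hc⟩ := hker
    have hq : q ⬝ᵥ W.mulVec (x - y) = 0 := by
      rw [Matrix.dotProduct_mulVec, hqW, zero_dotProduct]
    rw [← hc] at hq
    have hc0 : c = 0 := by
      have : q ⬝ᵥ (c • ((fun _ => 1 : Fin N → ℝ))) = c := by
        rw [dotProduct_smul, hq1]; simp
      rw [this] at hq; exact hq
    rw [hc0, zero_smul] at hc
    have := hWinj (x - y) hc.symm
    exact sub_eq_zero.mp this
  have hUnit : IsUnit (V * W) := Matrix.mulVec_injective_iff_isUnit.mp hVWinj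
  have hi : V * Vplus = 1 := by
    rw [hVplus, ← Matrix.mul_assoc, Matrix.mul_nonsing_inv _ (((Matrix.isUnit_iff_isUnit_det _).mp hUnit))]
  have hii : Matrix.vecMul q Vplus = 0 := by
    rw [hVplus, ← Matrix.vecMul_vecMul, hqW, Matrix.zero_vecMul]
  refine ⟨hi, hii, ?_⟩
  set E : Matrix (Fin N) (Fin N) ℝ := Matrix.of (fun (_ : Fin N) (j : Fin N) => q j) with hE
  set M : Matrix (Fin N) (Fin N) ℝ := Vplus * V - (1 - E) with hM
  -- V * E = 0
  have hVE : V * E = 0 := by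
    ext i j
    have : ∑ k, V i k * q j = (∑ k, V i k) * q j := by rw [Finset.sum_mul]
    have hrow : (∑ k, V i k) = 0 := by
      have := congrFun hV1 i
      simpa [Matrix.mulVec, dotProduct] using this
    simp [hE, Matrix.mul_apply, this, hrow]
  have hVM : V * M = 0 := by
    rw [hM, Matrix.mul_sub, Matrix.mul_sub, ← Matrix.mul_assoc, hi, Matrix.one_mul,
      Matrix.mul_one, hVE, sub_zero, sub_self]
  have hqE : Matrix.vecMul q E = q := by
    funext j
    have : (∑ i, q i) = 1 := by simpa [dotProduct] using hq1
    simp [hE, Matrix.vecMul, dotProduct, ← Finset.sum_mul, this]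
  have hqM : Matrix.vecMul q M = 0 := by
    rw [hM, Matrix.vecMul_sub, Matrix.vecMul_sub, ← Matrix.vecMul_vecMul, hii,
      Matrix.zero_vecMul, Matrix.vecMul_one, hqE, sub_self, sub_zero]
  have hM0 : M = 0 := by
    ext i j
    -- column j of M is in ker V
    have hcol : V.mulVec (fun i => M i j) = 0 := by
      funext k
      have := congrFun (congrFun hVM k) j
      simpa [Matrix.mul_apply, Matrix.mulVec, dotProduct] using this
    have hker : (fun i => M i j) ∈ LinearMap.ker V.mulVecLin := by simpa using hcol
    rw [hV, Submodule.mem_span_singleton] at hker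
    obtain ⟨c, hc⟩ := hker
    have hqc : q ⬝ᵥ (fun i => M i j) = 0 := by
      have := congrFun hqM j
      simpa [Matrix.vecMul, dotProduct] using this
    rw [← hc] at hqc
    have hc0 : c = 0 := by
      have : q ⬝ᵥ (c • ((fun _ => 1 : Fin N → ℝ))) = c := by
        rw [dotProduct_smul, hq1]; simp
      rw [this] at hqc; exact hqc
    have := congrFun hc i
    simp [hc0] at this
    simp [← this]
  have := sub_eq_zero.mp hM0
  rw [this]
end

section
/- Let N ≥ 2 and M ≥ 1, let V, W, q, V⁺ be as follows: V ∈ Matrix (Fin (N−1)) (Fin N) ℝ with ker V = span{1_N}, W ∈ Matrix (Fin N) (Fin (N−1)) ℝ with linearly independent columns, q ∈ ℝᴺ with qᵀW = 0 and qᵀ1_N = 1, and V⁺ := W(VW)⁻¹. Define the (2N+M)×(2(N−1)+M+2) block matrix T⁻¹ := [[I₂⊗V⁺, 0_{2N×M}, I₂⊗1_N], [0_{M×2(N−1)}, I_M, 0_{M×2}]] and the (2(N−1)+M+2)×(2N+M) block matrix T := [[I₂⊗V, 0_{2(N−1)×M}], [0_{M×2N}, I_M], [I₂⊗qᵀ,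 0_{2×M}]]. Then T·T⁻¹ = I_{2(N−1)+M+2} and T⁻¹·T = I_{2N+M}. -/
open Matrix Kronecker

/-!
Stacking `V` on top of `qᵀ` gives a square matrix with right inverse `[V⁺ | 1_N]`: the four
block identities are `V (W (VW)⁻¹) = I`, `V 1_N = 0`, `qᵀ W = 0` and `qᵀ 1_N = 1`. Here `VW` is
invertible because `Wx` lies in `ker V = span {1_N}` and is killed by `qᵀ`, hence vanishes.
Tensoring with `I₂` and bordering by `I_M` preserves these identities, which gives `T T⁻¹ = I`,
and `T⁻¹ T = I` follows since `T` is square.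
-/

namespace Matrix

section KernelLine

variable {K : Type*} [Field K] {m n : Type*} [Fintype n]

theorem eq_zero_of_mulVec_eq_zero_of_dotProduct_eq_zero {V : Matrix m n K} {v q y : n → K}
    (hV : LinearMap.ker V.mulVecLin = Submodule.span K {v}) (hqv : q ⬝ᵥ v ≠ 0)
    (hVy : V *ᵥ y = 0) (hqy : q ⬝ᵥ y = 0) : y = 0 := by
  have hy : y ∈ Submodule.span K {v} := hV ▸ LinearMap.mem_ker.mpr hVy
  obtain ⟨c, rfl⟩ := Submodule.mem_span_singleton.mp hy
  rw [dotProduct_smul, smul_eq_mul, mul_eq_zero] at hqy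
  simp [hqy.resolve_right hqv]

theorem mulVec_eq_zero_of_ker_eq_span {V : Matrix m n K} {v : n → K}
    (hV : LinearMap.ker V.mulVecLin = Submodule.span K {v}) : V *ᵥ v = 0 :=
  LinearMap.mem_ker.mp (hV ▸ Submodule.mem_span_singleton_self v)

theorem isUnit_mul_of_ker_eq_span [Fintype m] [DecidableEq m] {V : Matrix m n K}
    {W : Matrix n m K} {v q : n → K} (hV : LinearMap.ker V.mulVecLin = Submodule.span K {v})
    (hqv : q ⬝ᵥ v ≠ 0) (hW : LinearIndependent K W.col) (hqW : q ᵥ* W = 0) : IsUnit (V * W) := by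
  rw [← mulVec_injective_iff] at hW
  refine mulVec_injective_iff_isUnit.mp fun x y hxy => hW ?_
  rw [← sub_eq_zero, ← mulVec_sub]
  refine eq_zero_of_mulVec_eq_zero_of_dotProduct_eq_zero hV hqv ?_ ?_
  · rw [mulVec_mulVec, mulVec_sub, hxy, sub_self]
  · rw [dotProduct_mulVec, hqW, zero_dotProduct]

end KernelLine

section Blocks

variable {R : Type*} {p m n k l : Type*} [Fintype n]

theorem one_kronecker_mul_one_kronecker [CommSemiring R] [Fintype p] [DecidableEq p]
    (A : Matrix m n R) (B : Matrix n k R) :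
    ((1 : Matrix p p R) ⊗ₖ A) * ((1 : Matrix p p R) ⊗ₖ B) =
      (1 : Matrix p p R) ⊗ₖ (A * B) := by
  rw [← mul_kronecker_mul, Matrix.one_mul]

theorem fromRows_fromCols_mul_fromRows_fromCols_eq_one [Semiring R] [Fintype l]
    [DecidableEq m] [DecidableEq k] [DecidableEq l] {A : Matrix m n R} {A' : Matrix n m R}
    {r : Matrix k n R} {c : Matrix n k R} (hAA' : A * A' = 1) (hAc : A * c = 0)
    (hrA' : r * A' = 0) (hrc : r * c = 1) :
    fromRows (fromRows (fromCols A 0) (fromCols 0 (1 : Matrix l l R)))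
        (fromCols r (0 : Matrix k l R)) *
      fromRows (fromCols (fromCols A' 0) c) (fromCols (fromCols 0 (1 : Matrix l l R)) 0) = 1 := by
  simp only [fromRows_mul, fromCols_mul_fromRows, mul_fromCols, hAA', hAc, hrA', hrc,
    Matrix.mul_zero, Matrix.zero_mul, Matrix.mul_one, add_zero, zero_add]
  ext ((i | i) | i) ((j | j) | j) <;> simp [one_apply]

end Blocks

end Matrix

theorem stmt_7_general (N M : ℕ) (hN : 2 ≤ N)
    (V : Matrix (Fin (N-1)) (Fin N) ℝ)
    (hV : LinearMap.ker V.mulVecLin = Submodule.span ℝ {(fun _ => 1 : Fin N → ℝ)})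
    (W : Matrix (Fin N) (Fin (N-1)) ℝ)
    (hW : LinearIndependent ℝ (fun j : Fin (N-1) => fun i : Fin N => W i j))
    (q : Fin N → ℝ) (hqW : Matrix.vecMul q W = 0)
    (hq1 : q ⬝ᵥ (fun _ => 1) = 1)
    (Vplus : Matrix (Fin N) (Fin (N-1)) ℝ) (hVplus : Vplus = W * (V * W)⁻¹)
    (qrow : Matrix (Fin 1) (Fin N) ℝ) (hqrow : qrow = Matrix.of (fun _ j => q j))
    (onecol : Matrix (Fin N) (Fin 1) ℝ) (honecol : onecol = Matrix.of (fun _ _ => 1))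
    (T : Matrix (((Fin 2 × Fin (N-1)) ⊕ Fin M) ⊕ (Fin 2 × Fin 1))
        ((Fin 2 × Fin N) ⊕ Fin M) ℝ)
    (hT : T = Matrix.fromRows
      (Matrix.fromRows
        (Matrix.fromCols ((1 : Matrix (Fin 2) (Fin 2) ℝ) ⊗ₖ V) 0)
        (Matrix.fromCols 0 (1 : Matrix (Fin M) (Fin M) ℝ)))
      (Matrix.fromCols ((1 : Matrix (Fin 2) (Fin 2) ℝ) ⊗ₖ qrow) 0))
    (Tinv : Matrix ((Fin 2 × Fin N) ⊕ Fin M)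
        (((Fin 2 × Fin (N-1)) ⊕ Fin M) ⊕ (Fin 2 × Fin 1)) ℝ)
    (hTinv : Tinv = Matrix.fromRows
      (Matrix.fromCols
        (Matrix.fromCols ((1 : Matrix (Fin 2) (Fin 2) ℝ) ⊗ₖ Vplus) 0)
        ((1 : Matrix (Fin 2) (Fin 2) ℝ) ⊗ₖ onecol))
      (Matrix.fromCols (Matrix.fromCols 0 (1 : Matrix (Fin M) (Fin M) ℝ)) 0)) :
    T * Tinv = 1 ∧ Tinv * T = 1 := by
  have hqrow : qrow = replicateRow (Fin 1) q := hqrow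
  have honecol : onecol = replicateCol (Fin 1) (fun _ => 1) := honecol
  have hVW : IsUnit (V * W) := isUnit_mul_of_ker_eq_span hV (by simp [hq1]) hW hqW
  have hVVplus : V * Vplus = 1 := by
    rw [hVplus, ← Matrix.mul_assoc, mul_nonsing_inv _ ((isUnit_iff_isUnit_det _).mp hVW)]
  have hVonecol : V * onecol = 0 := by
    rw [honecol, ← replicateCol_mulVec, mulVec_eq_zero_of_ker_eq_span hV, replicateCol_zero]
  have hqrowVplus : qrow * Vplus = 0 := by
    rw [hqrow, hVplus, ← Matrix.mul_assoc, ← replicateRow_vecMul, hqW, replicateRow_zero,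
      Matrix.zero_mul]
  have hqrowonecol : qrow * onecol = 1 := by
    ext i j
    obtain rfl := Subsingleton.elim i j
    simp [hqrow, honecol, hq1]
  have hTTinv : T * Tinv = 1 := by
    subst hT hTinv
    refine fromRows_fromCols_mul_fromRows_fromCols_eq_one ?_ ?_ ?_ ?_ <;>
      simp only [one_kronecker_mul_one_kronecker, hVVplus, hVonecol, hqrowVplus, hqrowonecol,
        one_kronecker_one, kronecker_zero]
  refine ⟨hTTinv, (mul_eq_one_comm_of_card_eq _ _ _ ?_).mp hTTinv⟩
  simp only [Fintype.card_sum, Fintype.card_prod, Fintype.card_fin]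
  omega

/-- Equations (10)–(11) of the paper: the transformation matrices `T` and `T⁻¹` of the
observable canonical decomposition of the mixed clock ensemble are mutually inverse. -/
theorem stmt_7 (N M : ℕ) (hN : 2 ≤ N) (hM : 1 ≤ M)
    (V : Matrix (Fin (N-1)) (Fin N) ℝ)
    (hV : LinearMap.ker V.mulVecLin = Submodule.span ℝ {(fun _ => 1 : Fin N → ℝ)})
    (W : Matrix (Fin N) (Fin (N-1)) ℝ)
    (hW : LinearIndependent ℝ (fun j : Fin (N-1) => fun i : Fin N => W i j))
    (q : Fin N → ℝ) (hqW : Matrix.vecMul q W = 0)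
    (hq1 : q ⬝ᵥ (fun _ => 1) = 1)
    (Vplus : Matrix (Fin N) (Fin (N-1)) ℝ) (hVplus : Vplus = W * (V * W)⁻¹)
    (qrow : Matrix (Fin 1) (Fin N) ℝ) (hqrow : qrow = Matrix.of (fun _ j => q j))
    (onecol : Matrix (Fin N) (Fin 1) ℝ) (honecol : onecol = Matrix.of (fun _ _ => 1))
    (T : Matrix (((Fin 2 × Fin (N-1)) ⊕ Fin M) ⊕ (Fin 2 × Fin 1))
        ((Fin 2 × Fin N) ⊕ Fin M) ℝ)
    (hT : T = Matrix.fromRows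
      (Matrix.fromRows
        (Matrix.fromCols ((1 : Matrix (Fin 2) (Fin 2) ℝ) ⊗ₖ V) 0)
        (Matrix.fromCols 0 (1 : Matrix (Fin M) (Fin M) ℝ)))
      (Matrix.fromCols ((1 : Matrix (Fin 2) (Fin 2) ℝ) ⊗ₖ qrow) 0))
    (Tinv : Matrix ((Fin 2 × Fin N) ⊕ Fin M)
        (((Fin 2 × Fin (N-1)) ⊕ Fin M) ⊕ (Fin 2 × Fin 1)) ℝ)
    (hTinv : Tinv = Matrix.fromRows
      (Matrix.fromCols
        (Matrix.fromCols ((1 : Matrix (Fin 2) (Fin 2) ℝ) ⊗ₖ Vplus) 0)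
        ((1 : Matrix (Fin 2) (Fin 2) ℝ) ⊗ₖ onecol))
      (Matrix.fromCols (Matrix.fromCols 0 (1 : Matrix (Fin M) (Fin M) ℝ)) 0)) :
    T * Tinv = 1 ∧ Tinv * T = 1 :=
  stmt_7_general N M hN V hV W hW q hqW hq1 Vplus hVplus qrow hqrow onecol honecol T hT Tinv hTinv
end

section
/- Under the hypotheses on V, W, q, V⁺ (ker V = span{1_N}, W of full column rank, qᵀW = 0, qᵀ1_N = 1, V⁺ := W(VW)⁻¹), let τ ∈ ℝ, A := !![1, τ; 0, 1], β := ![τ²/2, τ] (a 2×1 matrix), M ≥ 1, J := [0_{(N−M)×M}; I_M] ∈ Matrix (Fin N) (Fin M) ℝ, and let 𝒜 := [[A⊗I_N, β⊗J], [0_{M×2N}, I_M]] be the (2N+M)×(2N+M) ensemble state matrix. With T and T⁻¹ the transformation matrices of the observable canonical decomposition, one has T·𝒜·T⁻¹ = [[A⊗I_{N−1}, β⊗(VJ), 0_{2(N−1)×2}], [0_{M×2(N−1)}, I_M, 0_{M×2}], [0_{2×2(N−1)}, β⊗(qᵀJ), A]]. -/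
/-!
Conjugating by `T` only uses that `[V; qᵀ]` is a left inverse of `[V⁺, 1_N]`: block
multiplication and the mixed-product rule `(X ⊗ Y)(X' ⊗ Y') = XX' ⊗ YY'` then produce the
triangular form, for arbitrary `A`, `β` and `J`. The left-inverse relations are `V 1_N = 0`
(from `ker V`), `qᵀ 1_N = 1`, `qᵀ V⁺ = qᵀ W (VW)⁻¹ = 0` and `V V⁺ = 1`; the last needs `VW`
invertible, which holds because `VWv = 0` puts `Wv` in `ker V = span 1_N`, where `qᵀ` vanishes
on `Wv` but not on `1_N`, so `Wv = 0` and `v = 0` by independence of the columns of `W`.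
-/

open Matrix Kronecker

namespace Matrix

theorem isUnit_mul_of_ker_mulVecLin_eq_span {K m n : Type*} [Field K] [Fintype m] [Fintype n]
    [DecidableEq m] {V : Matrix m n K} {W : Matrix n m K} {u q : n → K}
    (hV : LinearMap.ker V.mulVecLin = K ∙ u) (hW : LinearIndependent K W.col)
    (hqW : q ᵥ* W = 0) (hqu : q ⬝ᵥ u ≠ 0) : IsUnit (V * W) := by
  rw [← mulVec_injective_iff_isUnit, ← coe_mulVecLin, ← LinearMap.ker_eq_bot,
    Submodule.eq_bot_iff]
  intro v hv
  rw [LinearMap.mem_ker, mulVecLin_apply, ← mulVec_mulVec, ← mulVecLin_apply,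
    ← LinearMap.mem_ker, hV, Submodule.mem_span_singleton] at hv
  obtain ⟨c, hc⟩ := hv
  have hc0 : c = 0 := by
    have : c * (q ⬝ᵥ u) = 0 := by
      rw [← smul_eq_mul, ← dotProduct_smul, hc, dotProduct_mulVec, hqW, zero_dotProduct]
    exact (mul_eq_zero.mp this).resolve_right hqu
  apply mulVec_injective_iff.mpr hW
  rw [mulVec_zero, ← hc, hc0, zero_smul]

theorem mul_submatrix_id {α l n m o : Type*} [NonUnitalNonAssocSemiring α] [Fintype n]
    (X : Matrix l n α) (Y : Matrix n m α) (e : o → m) :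
    X * Y.submatrix id e = (X * Y).submatrix id e := by
  rw [submatrix_mul X Y id id e Function.bijective_id, submatrix_id_id]

theorem fromCols_add_fromCols {α l n₁ n₂ : Type*} [Add α] (A C : Matrix l n₁ α)
    (B D : Matrix l n₂ α) : fromCols A B + fromCols C D = fromCols (A + C) (B + D) := by
  ext i (j | j) <;> rfl

theorem kronecker_one_fin_one {α l m : Type*} [MulZeroOneClass α] (A : Matrix l m α) :
    A ⊗ₖ (1 : Matrix (Fin 1) (Fin 1) α) = A.submatrix Prod.fst Prod.fst := by
  ext ⟨i, a⟩ ⟨j, b⟩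
  simp [Subsingleton.elim a b]

theorem conj_fromBlocks_kronecker_eq {R p r n m : Type*} [CommRing R] [Fintype p] [Fintype n]
    [Fintype m] [DecidableEq p] [DecidableEq r] [DecidableEq n] [DecidableEq m]
    (A : Matrix p p R) (β : Matrix p (Fin 1) R) (J : Matrix n m R) (V : Matrix r n R)
    (Vplus : Matrix n r R) (qrow : Matrix (Fin 1) n R)
    (onecol : Matrix n (Fin 1) R) (hVVplus : V * Vplus = 1) (hVone : V * onecol = 0)
    (hqVplus : qrow * Vplus = 0) (hqone : qrow * onecol = 1) :
    fromRows (fromRows (fromCols ((1 : Matrix p p R) ⊗ₖ V) 0) (fromCols 0 (1 : Matrix m m R)))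
        (fromCols ((1 : Matrix p p R) ⊗ₖ qrow) 0) *
      fromBlocks (A ⊗ₖ (1 : Matrix n n R))
        ((β ⊗ₖ J).submatrix id (fun j : m => ((0 : Fin 1), j))) 0 (1 : Matrix m m R) *
      fromRows
        (fromCols (fromCols ((1 : Matrix p p R) ⊗ₖ Vplus) 0) ((1 : Matrix p p R) ⊗ₖ onecol))
        (fromCols (fromCols 0 (1 : Matrix m m R)) 0) =
    fromBlocks
      (fromBlocks (A ⊗ₖ (1 : Matrix r r R))
        ((β ⊗ₖ (V * J)).submatrix id (fun j : m => ((0 : Fin 1), j))) 0 1)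
      0
      (fromCols 0 ((β ⊗ₖ (qrow * J)).submatrix id (fun j : m => ((0 : Fin 1), j))))
      (A.submatrix Prod.fst Prod.fst) := by
  simp only [fromRows_mul, fromCols_mul_fromBlocks, fromCols_mul_fromRows, mul_fromCols,
    mul_submatrix_id, ← mul_kronecker_mul, Matrix.zero_mul, Matrix.mul_zero, Matrix.mul_one,
    Matrix.one_mul, add_zero, zero_add, hVVplus, hVone, hqVplus, hqone, kronecker_zero,
    kronecker_one_fin_one, submatrix_zero, Pi.zero_apply, fromCols_add_fromCols, fromCols_zero]
  rw [← fromRows_fromCols_eq_fromBlocks, ← fromRows_fromCols_eq_fromBlocks]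
  congr 1
  ext (i | i) (j | j) <;> rfl

end Matrix

theorem stmt_8_general (N M : ℕ)
    (V : Matrix (Fin (N-1)) (Fin N) ℝ)
    (hV : LinearMap.ker V.mulVecLin = Submodule.span ℝ {(fun _ => 1 : Fin N → ℝ)})
    (W : Matrix (Fin N) (Fin (N-1)) ℝ)
    (hW : LinearIndependent ℝ (fun j : Fin (N-1) => fun i : Fin N => W i j))
    (q : Fin N → ℝ) (hqW : Matrix.vecMul q W = 0)
    (hq1 : q ⬝ᵥ (fun _ => 1) = 1)
    (Vplus : Matrix (Fin N) (Fin (N-1)) ℝ) (hVplus : Vplus = W * (V * W)⁻¹)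
    (qrow : Matrix (Fin 1) (Fin N) ℝ) (hqrow : qrow = Matrix.of (fun _ j => q j))
    (onecol : Matrix (Fin N) (Fin 1) ℝ) (honecol : onecol = Matrix.of (fun _ _ => 1))
    (A : Matrix (Fin 2) (Fin 2) ℝ)
    (β : Matrix (Fin 2) (Fin 1) ℝ)
    (J : Matrix (Fin N) (Fin M) ℝ)
    (T : Matrix (((Fin 2 × Fin (N-1)) ⊕ Fin M) ⊕ (Fin 2 × Fin 1))
        ((Fin 2 × Fin N) ⊕ Fin M) ℝ)
    (hT : T = Matrix.fromRows
      (Matrix.fromRows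
        (Matrix.fromCols ((1 : Matrix (Fin 2) (Fin 2) ℝ) ⊗ₖ V) 0)
        (Matrix.fromCols 0 (1 : Matrix (Fin M) (Fin M) ℝ)))
      (Matrix.fromCols ((1 : Matrix (Fin 2) (Fin 2) ℝ) ⊗ₖ qrow) 0))
    (Tinv : Matrix ((Fin 2 × Fin N) ⊕ Fin M)
        (((Fin 2 × Fin (N-1)) ⊕ Fin M) ⊕ (Fin 2 × Fin 1)) ℝ)
    (hTinv : Tinv = Matrix.fromRows
      (Matrix.fromCols
        (Matrix.fromCols ((1 : Matrix (Fin 2) (Fin 2) ℝ) ⊗ₖ Vplus) 0)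
        ((1 : Matrix (Fin 2) (Fin 2) ℝ) ⊗ₖ onecol))
      (Matrix.fromCols (Matrix.fromCols 0 (1 : Matrix (Fin M) (Fin M) ℝ)) 0))
    (𝒜 : Matrix ((Fin 2 × Fin N) ⊕ Fin M) ((Fin 2 × Fin N) ⊕ Fin M) ℝ)
    (h𝒜 : 𝒜 = Matrix.fromBlocks
      (A ⊗ₖ (1 : Matrix (Fin N) (Fin N) ℝ))
      ((β ⊗ₖ J).submatrix id (fun j : Fin M => ((0 : Fin 1), j)))
      0 (1 : Matrix (Fin M) (Fin M) ℝ)) :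
    T * 𝒜 * Tinv = Matrix.fromBlocks
      (Matrix.fromBlocks
        (A ⊗ₖ (1 : Matrix (Fin (N-1)) (Fin (N-1)) ℝ))
        ((β ⊗ₖ (V * J)).submatrix id (fun j : Fin M => ((0 : Fin 1), j)))
        0 (1 : Matrix (Fin M) (Fin M) ℝ))
      0
      (Matrix.fromCols 0
        ((β ⊗ₖ (qrow * J)).submatrix id (fun j : Fin M => ((0 : Fin 1), j))))
      (A.submatrix Prod.fst Prod.fst) := by
  obtain rfl : qrow = replicateRow (Fin 1) q := hqrow
  obtain rfl : onecol = replicateCol (Fin 1) (fun _ => 1) := honecol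
  subst hVplus hT hTinv h𝒜
  have hVW : IsUnit (V * W).det := (isUnit_iff_isUnit_det _).mp <|
    isUnit_mul_of_ker_mulVecLin_eq_span hV hW hqW (by rw [hq1]; exact one_ne_zero)
  have hV1 : V *ᵥ (fun _ => 1) = 0 := by
    have h1 : (fun _ => 1 : Fin N → ℝ) ∈ LinearMap.ker V.mulVecLin :=
      hV ▸ Submodule.mem_span_singleton_self _
    simpa using h1
  have hqW' : replicateRow (Fin 1) q * W = 0 := by
    rw [← replicateRow_vecMul, hqW, replicateRow_zero]
  apply conj_fromBlocks_kronecker_eq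
  · rw [← Matrix.mul_assoc, mul_nonsing_inv _ hVW]
  · rw [← replicateCol_mulVec, hV1, replicateCol_zero]
  · rw [← Matrix.mul_assoc, hqW', Matrix.zero_mul]
  · ext i j
    rw [replicateRow_mul_replicateCol_apply, hq1, Subsingleton.elim i j, one_apply_eq]

/-- Equation (13) of the paper: the transformed state matrix `T 𝒜 T⁻¹` of the mixed clock
ensemble is in lower block-triangular (observable canonical) form. -/
theorem stmt_8 (N M : ℕ) (hN : 2 ≤ N) (hM : 1 ≤ M) (τ : ℝ)
    (V : Matrix (Fin (N-1)) (Fin N) ℝ)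
    (hV : LinearMap.ker V.mulVecLin = Submodule.span ℝ {(fun _ => 1 : Fin N → ℝ)})
    (W : Matrix (Fin N) (Fin (N-1)) ℝ)
    (hW : LinearIndependent ℝ (fun j : Fin (N-1) => fun i : Fin N => W i j))
    (q : Fin N → ℝ) (hqW : Matrix.vecMul q W = 0)
    (hq1 : q ⬝ᵥ (fun _ => 1) = 1)
    (Vplus : Matrix (Fin N) (Fin (N-1)) ℝ) (hVplus : Vplus = W * (V * W)⁻¹)
    (qrow : Matrix (Fin 1) (Fin N) ℝ) (hqrow : qrow = Matrix.of (fun _ j => q j))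
    (onecol : Matrix (Fin N) (Fin 1) ℝ) (honecol : onecol = Matrix.of (fun _ _ => 1))
    (A : Matrix (Fin 2) (Fin 2) ℝ) (hA : A = !![1, τ; 0, 1])
    (β : Matrix (Fin 2) (Fin 1) ℝ) (hβ : β = !![τ^2/2; τ])
    (J : Matrix (Fin N) (Fin M) ℝ)
    (hJ : J = Matrix.of (fun i j => if i.val = N - M + j.val then 1 else 0))
    (T : Matrix (((Fin 2 × Fin (N-1)) ⊕ Fin M) ⊕ (Fin 2 × Fin 1))
        ((Fin 2 × Fin N) ⊕ Fin M) ℝ)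
    (hT : T = Matrix.fromRows
      (Matrix.fromRows
        (Matrix.fromCols ((1 : Matrix (Fin 2) (Fin 2) ℝ) ⊗ₖ V) 0)
        (Matrix.fromCols 0 (1 : Matrix (Fin M) (Fin M) ℝ)))
      (Matrix.fromCols ((1 : Matrix (Fin 2) (Fin 2) ℝ) ⊗ₖ qrow) 0))
    (Tinv : Matrix ((Fin 2 × Fin N) ⊕ Fin M)
        (((Fin 2 × Fin (N-1)) ⊕ Fin M) ⊕ (Fin 2 × Fin 1)) ℝ)
    (hTinv : Tinv = Matrix.fromRows
      (Matrix.fromCols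
        (Matrix.fromCols ((1 : Matrix (Fin 2) (Fin 2) ℝ) ⊗ₖ Vplus) 0)
        ((1 : Matrix (Fin 2) (Fin 2) ℝ) ⊗ₖ onecol))
      (Matrix.fromCols (Matrix.fromCols 0 (1 : Matrix (Fin M) (Fin M) ℝ)) 0))
    (𝒜 : Matrix ((Fin 2 × Fin N) ⊕ Fin M) ((Fin 2 × Fin N) ⊕ Fin M) ℝ)
    (h𝒜 : 𝒜 = Matrix.fromBlocks
      (A ⊗ₖ (1 : Matrix (Fin N) (Fin N) ℝ))
      ((β ⊗ₖ J).submatrix id (fun j : Fin M => ((0 : Fin 1), j)))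
      0 (1 : Matrix (Fin M) (Fin M) ℝ)) :
    T * 𝒜 * Tinv = Matrix.fromBlocks
      (Matrix.fromBlocks
        (A ⊗ₖ (1 : Matrix (Fin (N-1)) (Fin (N-1)) ℝ))
        ((β ⊗ₖ (V * J)).submatrix id (fun j : Fin M => ((0 : Fin 1), j)))
        0 (1 : Matrix (Fin M) (Fin M) ℝ))
      0
      (Matrix.fromCols 0
        ((β ⊗ₖ (qrow * J)).submatrix id (fun j : Fin M => ((0 : Fin 1), j))))
      (A.submatrix Prod.fst Prod.fst) :=
  stmt_8_general N M V hV W hW q hqW hq1 Vplus hVplus qrow hqrow onecol honecol A β J T hT Tinv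
    hTinv 𝒜 h𝒜
end

section
/- Let n, p ≥ 1, r > 0, let P_oo be a symmetric positive semidefinite n×n real matrix, P_ōo a 2×n real matrix, P_ōō a symmetric 2×2 real matrix, C_o a p×n real matrix, and set P̆ := [[P_oo, P_ōoᵀ], [P_ōo, P_ōō]], C̃ := [C_o, 0_{p×2}], S := C_o·P_oo·C_oᵀ + r·I_p. Then S is symmetric positive definite (hence invertible), and with L_o := P_oo·C_oᵀ·S⁻¹ and L_ō := P_ōo·C_oᵀ·S⁻¹ one has: (i) P̆·C̃ᵀ = [P_oo·C_oᵀ; P_ōo·C_oᵀ] and C̃·P̆·C̃ᵀ = C_o·P_oo·C_oᵀ, so P̆·C̃ᵀ·(C̃·P̆·C̃ᵀ + rI_p)⁻¹ = [L_o; L_ō]; (ii) the (1,1) block of (I_{n+2} − [L_o; L_ō]·C̃)·P̆ equals (I_n − L_o·C_o)·P_oo and its (2,1) block equals P_ōo·(I_n − C_oᵀ·L_oᵀ). -/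
/-!
Because `C̃ = [C_o, 0]` annihilates the unobservable coordinates, `P̆ C̃ᵀ` and `C̃ P̆ C̃ᵀ` only see
the blocks `P_oo` and `P_ōo`, so the innovation covariance is `S = C_o P_oo C_oᵀ + r I`, positive
definite since `r > 0`. The update factor `I - L C̃` is block lower triangular with identity
`(2,2)` block, so the first block column of `(I - L C̃) P̆` again involves only `P_oo` and `P_ōo`;
the symmetry of `P_oo` and `S⁻¹` turns `L_ō C_o P_oo` into `P_ōo C_oᵀ L_oᵀ`.
-/

open Matrix

namespace Matrix

section PosDef

variable {m n : Type*} [Fintype m] [Fintype n] [DecidableEq m]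

theorem PosSemidef.posDef_mul_mul_transpose_add_smul_one {P : Matrix n n ℝ} (hP : P.PosSemidef)
    (C : Matrix m n ℝ) {r : ℝ} (hr : 0 < r) : (C * P * Cᵀ + r • (1 : Matrix m m ℝ)).PosDef := by
  have hrI : (r • (1 : Matrix m m ℝ)).PosDef := by
    rw [smul_one_eq_diagonal]
    exact posDef_diagonal_iff.mpr fun _ => hr
  exact PosDef.posSemidef_add (hP.mul_mul_conjTranspose_same C) hrI

end PosDef

section Blocks

variable {l m n R : Type*} [CommRing R]

theorem fromBlocks_mul_transpose_fromCols_zero [Fintype m] [Fintype n] (A : Matrix m m R)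
    (B : Matrix m n R) (C : Matrix n m R) (D : Matrix n n R) (M : Matrix l m R) :
    fromBlocks A B C D * (fromCols M (0 : Matrix l n R))ᵀ = fromRows (A * Mᵀ) (C * Mᵀ) := by
  rw [transpose_fromCols, fromBlocks_mul_fromRows]
  simp

theorem fromCols_zero_mul_fromBlocks_mul_transpose [Fintype m] [Fintype n] (A : Matrix m m R)
    (B : Matrix m n R) (C : Matrix n m R) (D : Matrix n n R) (M : Matrix l m R) :
    fromCols M (0 : Matrix l n R) * fromBlocks A B C D * (fromCols M (0 : Matrix l n R))ᵀ =
      M * A * Mᵀ := by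
  rw [Matrix.mul_assoc (fromCols M 0), fromBlocks_mul_transpose_fromCols_zero,
    fromCols_mul_fromRows]
  simp [Matrix.mul_assoc]

theorem one_sub_fromRows_mul_fromCols_zero [Fintype l] [DecidableEq m] [DecidableEq n]
    (K : Matrix m l R) (L : Matrix n l R) (M : Matrix l m R) :
    1 - fromRows K L * fromCols M (0 : Matrix l n R) = fromBlocks (1 - K * M) 0 (-(L * M)) 1 := by
  rw [fromRows_mul_fromCols]
  ext (i | i) (j | j) <;> simp [one_apply]

variable [Fintype l] [Fintype m] [Fintype n] [DecidableEq m] [DecidableEq n]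
  (K : Matrix m l R) (L : Matrix n l R) (M : Matrix l m R)
  (A : Matrix m m R) (B : Matrix m n R) (C : Matrix n m R) (D : Matrix n n R)

theorem toBlocks₁₁_one_sub_fromRows_mul_fromCols_zero_mul_fromBlocks :
    ((1 - fromRows K L * fromCols M (0 : Matrix l n R)) * fromBlocks A B C D).toBlocks₁₁ =
      (1 - K * M) * A := by
  rw [one_sub_fromRows_mul_fromCols_zero, fromBlocks_multiply, toBlocks_fromBlocks₁₁]
  simp

theorem toBlocks₂₁_one_sub_fromRows_mul_fromCols_zero_mul_fromBlocks :
    ((1 - fromRows K L * fromCols M (0 : Matrix l n R)) * fromBlocks A B C D).toBlocks₂₁ =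
      C - L * M * A := by
  rw [one_sub_fromRows_mul_fromCols_zero, fromBlocks_multiply, toBlocks_fromBlocks₂₁]
  simp [sub_eq_neg_add]

end Blocks

theorem mul_mul_transpose_nonsing_inv_mul_mul_eq {l m n R : Type*} [Fintype l] [Fintype m]
    [DecidableEq l] [CommRing R] {A : Matrix m m R} (hA : Aᵀ = A) {S : Matrix l l R}
    (hS : Sᵀ = S) (C : Matrix n m R) (M : Matrix l m R) :
    C * Mᵀ * S⁻¹ * M * A = C * (Mᵀ * (A * Mᵀ * S⁻¹)ᵀ) := by
  simp only [transpose_mul, transpose_transpose, transpose_nonsing_inv, hS, hA, Matrix.mul_assoc]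

end Matrix

theorem stmt_11_general (n p : ℕ) (r : ℝ) (hr : 0 < r)
    (Poo : Matrix (Fin n) (Fin n) ℝ) (hPoo : Poo.PosSemidef)
    (Pbo : Matrix (Fin 2) (Fin n) ℝ)
    (Pbb : Matrix (Fin 2) (Fin 2) ℝ)
    (Co : Matrix (Fin p) (Fin n) ℝ)
    (Pbrev : Matrix (Fin n ⊕ Fin 2) (Fin n ⊕ Fin 2) ℝ)
    (hPbrev : Pbrev = Matrix.fromBlocks Poo Pboᵀ Pbo Pbb)
    (Ctil : Matrix (Fin p) (Fin n ⊕ Fin 2) ℝ)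
    (hCtil : Ctil = Matrix.fromCols Co 0)
    (S : Matrix (Fin p) (Fin p) ℝ)
    (hS : S = Co * Poo * Coᵀ + r • (1 : Matrix (Fin p) (Fin p) ℝ))
    (Lo : Matrix (Fin n) (Fin p) ℝ) (hLo : Lo = Poo * Coᵀ * S⁻¹)
    (Lb : Matrix (Fin 2) (Fin p) ℝ) (hLb : Lb = Pbo * Coᵀ * S⁻¹) :
    S.PosDef ∧ IsUnit S ∧
    Pbrev * Ctilᵀ = Matrix.fromRows (Poo * Coᵀ) (Pbo * Coᵀ) ∧
    Ctil * Pbrev * Ctilᵀ = Co * Poo * Coᵀ ∧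
    Pbrev * Ctilᵀ * (Ctil * Pbrev * Ctilᵀ + r • (1 : Matrix (Fin p) (Fin p) ℝ))⁻¹ =
      Matrix.fromRows Lo Lb ∧
    ((1 - Matrix.fromRows Lo Lb * Ctil) * Pbrev).toBlocks₁₁ = (1 - Lo * Co) * Poo ∧
    ((1 - Matrix.fromRows Lo Lb * Ctil) * Pbrev).toBlocks₂₁ = Pbo * (1 - Coᵀ * Loᵀ) := by
  subst hPbrev hCtil
  have hSpd : S.PosDef := hS ▸ hPoo.posDef_mul_mul_transpose_add_smul_one Co hr
  have hgain : Lb * Co * Poo = Pbo * (Coᵀ * Loᵀ) := by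
    rw [hLb, hLo]
    exact mul_mul_transpose_nonsing_inv_mul_mul_eq hPoo.isHermitian.eq hSpd.isHermitian.eq _ _
  refine ⟨hSpd, hSpd.isUnit, fromBlocks_mul_transpose_fromCols_zero ..,
    fromCols_zero_mul_fromBlocks_mul_transpose .., ?_,
    toBlocks₁₁_one_sub_fromRows_mul_fromCols_zero_mul_fromBlocks .., ?_⟩
  · rw [fromBlocks_mul_transpose_fromCols_zero, fromCols_zero_mul_fromBlocks_mul_transpose, ← hS,
      fromRows_mul, hLo, hLb]
  · rw [toBlocks₂₁_one_sub_fromRows_mul_fromCols_zero_mul_fromBlocks, hgain, Matrix.mul_sub,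
      Matrix.mul_one]

/-- Lemma 1 of the paper (measurement-update step): the Kalman gains and the posterior
covariance blocks `P_oo`, `P_ōo` do not depend on the unobservable block `P_ōō`. -/
theorem stmt_11 (n p : ℕ) (hn : 1 ≤ n) (hp : 1 ≤ p) (r : ℝ) (hr : 0 < r)
    (Poo : Matrix (Fin n) (Fin n) ℝ) (hPoo : Poo.PosSemidef)
    (Pbo : Matrix (Fin 2) (Fin n) ℝ)
    (Pbb : Matrix (Fin 2) (Fin 2) ℝ) (hPbb : Pbb.IsSymm)
    (Co : Matrix (Fin p) (Fin n) ℝ)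
    (Pbrev : Matrix (Fin n ⊕ Fin 2) (Fin n ⊕ Fin 2) ℝ)
    (hPbrev : Pbrev = Matrix.fromBlocks Poo Pboᵀ Pbo Pbb)
    (Ctil : Matrix (Fin p) (Fin n ⊕ Fin 2) ℝ)
    (hCtil : Ctil = Matrix.fromCols Co 0)
    (S : Matrix (Fin p) (Fin p) ℝ)
    (hS : S = Co * Poo * Coᵀ + r • (1 : Matrix (Fin p) (Fin p) ℝ))
    (Lo : Matrix (Fin n) (Fin p) ℝ) (hLo : Lo = Poo * Coᵀ * S⁻¹)
    (Lb : Matrix (Fin 2) (Fin p) ℝ) (hLb : Lb = Pbo * Coᵀ * S⁻¹) :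
    S.PosDef ∧ IsUnit S ∧
    Pbrev * Ctilᵀ = Matrix.fromRows (Poo * Coᵀ) (Pbo * Coᵀ) ∧
    Ctil * Pbrev * Ctilᵀ = Co * Poo * Coᵀ ∧
    Pbrev * Ctilᵀ * (Ctil * Pbrev * Ctilᵀ + r • (1 : Matrix (Fin p) (Fin p) ℝ))⁻¹ =
      Matrix.fromRows Lo Lb ∧
    ((1 - Matrix.fromRows Lo Lb * Ctil) * Pbrev).toBlocks₁₁ = (1 - Lo * Co) * Poo ∧
    ((1 - Matrix.fromRows Lo Lb * Ctil) * Pbrev).toBlocks₂₁ = Pbo * (1 - Coᵀ * Loᵀ) :=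
  stmt_11_general n p r hr Poo hPoo Pbo Pbb Co Pbrev hPbrev Ctil hCtil S hS Lo hLo Lb hLb
end

section
/- Let τ ∈ ℝ, A := !![1, τ; 0, 1] ∈ Matrix (Fin 2) (Fin 2) ℝ, and let m ≥ 1 and M ∈ Matrix (Fin m) (Fin m) ℝ be such that every complex eigenvalue λ of M (i.e., every λ ∈ spectrum ℂ of M mapped into ℂ) satisfies |λ| < 1. Then for every G ∈ Matrix (Fin 2) (Fin m) ℝ there exists a unique P ∈ Matrix (Fin 2) (Fin m) ℝ satisfying P = A·P·Mᵀ + G. -/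
open Matrix

/-!
The matrix `A` is unipotent, so `N := A - 1` is nilpotent, and no eigenvalue of `M` equals `1`,
so `1 - Mᵀ` is invertible. If `P = A P Mᵀ`, then `Nᵏ P (1 - Mᵀ) = Nᵏ⁺¹ P Mᵀ` for every `k`;
hence `Nᵏ⁺¹ P = 0` forces `Nᵏ P = 0`, and descending from `Nʳ = 0` gives `P = 0`. The linear
map `P ↦ P - A P Mᵀ` on the finite-dimensional space of `2 × m` matrices is therefore injective,
hence bijective.
-/

namespace Matrix

variable {n m : Type*} [Fintype n] [Fintype m]

def steinMap {R : Type*} [CommRing R] (A : Matrix n n R) (B : Matrix m m R) :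
    Matrix n m R →ₗ[R] Matrix n m R where
  toFun P := P - A * P * B
  map_add' P Q := by
    rw [Matrix.mul_add, Matrix.add_mul]
    abel
  map_smul' c P := by
    rw [Matrix.mul_smul, Matrix.smul_mul, smul_sub]
    rfl

@[simp]
theorem steinMap_apply {R : Type*} [CommRing R] (A : Matrix n n R) (B : Matrix m m R)
    (P : Matrix n m R) :
    steinMap A B P = P - A * P * B :=
  rfl

variable [DecidableEq n] [DecidableEq m]

theorem map_mem_spectrum_map {K L : Type*} [Field K] [Field L] (f : K →+* L)
    {M : Matrix m m K} {r : K} (h : r ∈ spectrum K M) : f r ∈ spectrum L (M.map f) := by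
  rw [mem_spectrum_iff_isRoot_charpoly] at h ⊢
  rw [charpoly_map]
  exact h.map

theorem eq_zero_of_eq_mul_mul {R : Type*} [Ring R] {A : Matrix n n R} {B : Matrix m m R}
    (hA : IsNilpotent (A - 1)) (hB : IsUnit (1 - B)) {P : Matrix n m R}
    (hP : P = A * P * B) : P = 0 := by
  obtain ⟨r, hr⟩ := hA
  obtain ⟨u, hu⟩ := hB
  have cancel : ∀ X : Matrix n m R, X * (1 - B) = 0 → X = 0 := fun X hX => by
    rw [← Matrix.mul_one X, ← u.mul_inv, ← Matrix.mul_assoc, hu, hX, Matrix.zero_mul]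
  have hPB : P * (1 - B) = (A - 1) * P * B := by
    rw [Matrix.mul_sub, Matrix.mul_one, Matrix.sub_mul, Matrix.sub_mul, Matrix.one_mul, ← hP]
  have descend : ∀ k, (A - 1) ^ (k + 1) * P = 0 → (A - 1) ^ k * P = 0 := fun k hk => by
    refine cancel _ ?_
    rw [Matrix.mul_assoc, hPB, ← Matrix.mul_assoc, ← Matrix.mul_assoc, ← pow_succ, hk,
      Matrix.zero_mul]
  have of_pow_mul_eq_zero : ∀ k, (A - 1) ^ k * P = 0 → P = 0 := fun k => by
    induction k with
    | zero => simp only [pow_zero, Matrix.one_mul, imp_self]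
    | succ k ih => exact fun hk => ih (descend k hk)
  exact of_pow_mul_eq_zero r (by rw [hr, Matrix.zero_mul])

theorem existsUnique_eq_mul_mul_add {K : Type*} [Field K] {A : Matrix n n K} {B : Matrix m m K}
    (hA : IsNilpotent (A - 1)) (hB : IsUnit (1 - B)) (G : Matrix n m K) :
    ∃! P : Matrix n m K, P = A * P * B + G := by
  have hinj : Function.Injective (steinMap A B) := by
    rw [← LinearMap.ker_eq_bot, LinearMap.ker_eq_bot']
    intro P hP
    exact eq_zero_of_eq_mul_mul hA hB (sub_eq_zero.mp hP)
  have hbij : Function.Bijective (steinMap A B) :=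
    ⟨hinj, LinearMap.injective_iff_surjective.mp hinj⟩
  simpa only [steinMap_apply, sub_eq_iff_eq_add'] using hbij.existsUnique G

end Matrix

theorem stmt_13_general (τ : ℝ) (A : Matrix (Fin 2) (Fin 2) ℝ) (hA : A = !![1, τ; 0, 1])
    (m : ℕ) (M : Matrix (Fin m) (Fin m) ℝ)
    (hM : ∀ lam ∈ spectrum ℂ (M.map (fun x : ℝ => (x : ℂ))), ‖lam‖ < 1) :
    ∀ G : Matrix (Fin 2) (Fin m) ℝ,
      ∃! P : Matrix (Fin 2) (Fin m) ℝ, P = A * P * Mᵀ + G := by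
  have hA_nilpotent : IsNilpotent (A - 1) := ⟨2, by
    subst hA
    ext i j
    fin_cases i <;> fin_cases j <;> simp [sq, Matrix.mul_apply]⟩
  have hM_unit : IsUnit (1 - Mᵀ) := by
    rw [← transpose_one, ← transpose_sub, isUnit_transpose, ← map_one (algebraMap ℝ _),
      ← spectrum.notMem_iff]
    intro h
    simpa using hM _ (map_mem_spectrum_map Complex.ofRealHom h)
  exact existsUnique_eq_mul_mul_add hA_nilpotent hM_unit

/-- Algebraic core of Theorem 1 of the paper: the Stein-type equation `P = A P Mᵀ + G`
has a unique solution when all complex eigenvalues of `M` lie strictly inside the unit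
circle and `A` is the unipotent clock transition matrix. -/
theorem stmt_13 (τ : ℝ) (A : Matrix (Fin 2) (Fin 2) ℝ) (hA : A = !![1, τ; 0, 1])
    (m : ℕ) (hm : 1 ≤ m) (M : Matrix (Fin m) (Fin m) ℝ)
    (hM : ∀ lam ∈ spectrum ℂ (M.map (fun x : ℝ => (x : ℂ))), ‖lam‖ < 1) :
    ∀ G : Matrix (Fin 2) (Fin m) ℝ,
      ∃! P : Matrix (Fin 2) (Fin m) ℝ, P = A * P * Mᵀ + G :=
  stmt_13_general τ A hA m M hM
end

section
/- Let τ, σ₁, σ₂, σ₃ ∈ ℝ, A₃ := !![1, τ, τ²/2; 0, 1, τ; 0, 0, 1], C₃ := !![1, 0, 0], and let Q be the 3×3 symmetric matrix with Q₁₁ = τσ₁² + (τ³/3)σ₂² + (τ⁵/20)σ₃², Q₁₂ = (τ²/2)σ₂² + (τ⁴/8)σ₃², Q₁₃ = (τ³/6)σ₃², Q₂₂ = τσ₂² + (τ³/3)σ₃², Q₂₃ = (τ²/2)σ₃², Q₃₃ = τσ₃². Then with X₃ the 1×9 row matrix [C₃(A₃² − 3A₃ + 3I₃), C₃(A₃ −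 3I₃), C₃], one has X₃·(I₃ ⊗ Q)·X₃ᵀ = 6τσ₁² + τ³σ₂² + (11τ⁵/20)σ₃² (as a 1×1 matrix). -/
open Matrix Kronecker

/-- Equation (8) of the paper: the Hadamard-variance computation for a free-running
third-order (hydrogen-maser-type) clock, `X₃ (I₃ ⊗ Q) X₃ᵀ = 6τσ₁² + τ³σ₂² + (11τ⁵/20)σ₃²`. -/
theorem stmt_15 (τ s1 s2 s3 : ℝ)
    (A3 : Matrix (Fin 3) (Fin 3) ℝ) (hA3 : A3 = !![1, τ, τ^2/2; 0, 1, τ; 0, 0, 1])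
    (C3 : Matrix (Fin 1) (Fin 3) ℝ) (hC3 : C3 = !![1, 0, 0])
    (Q : Matrix (Fin 3) (Fin 3) ℝ)
    (hQ : Q = !![τ*s1^2 + (τ^3/3)*s2^2 + (τ^5/20)*s3^2, (τ^2/2)*s2^2 + (τ^4/8)*s3^2, (τ^3/6)*s3^2;
                 (τ^2/2)*s2^2 + (τ^4/8)*s3^2, τ*s2^2 + (τ^3/3)*s3^2, (τ^2/2)*s3^2;
                 (τ^3/6)*s3^2, (τ^2/2)*s3^2, τ*s3^2])
    (X3 : Matrix (Fin 1) (Fin 3 × Fin 3) ℝ)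
    (hX3 : X3 = Matrix.of (fun i jp =>
      ![C3 * (A3 * A3 - (3:ℝ) • A3 + (3:ℝ) • 1), C3 * (A3 - (3:ℝ) • 1), C3] jp.1 i jp.2)) :
    X3 * ((1 : Matrix (Fin 3) (Fin 3) ℝ) ⊗ₖ Q) * X3ᵀ =
      Matrix.of (fun _ _ => 6*τ*s1^2 + τ^3*s2^2 + (11*τ^5/20)*s3^2) := by
  subst hA3 hC3 hQ hX3
  ext i j
  fin_cases i; fin_cases j
  simp [Matrix.mul_apply, Fintype.sum_prod_type, Fin.sum_univ_succ, kroneckerMap_apply,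
    Matrix.one_apply, Matrix.smul_apply, Matrix.vecMul, dotProduct, Fin.sum_univ_three,
    Matrix.sub_apply, Matrix.add_apply, Fin.isValue, Matrix.cons_val_zero, Matrix.cons_val_one]
  ring
end

section
/- Let N ≥ 2, 1 ≤ M < N, τ ∈ ℝ with τ ≠ 0. Let A := !![1, τ; 0, 1], β := ![τ²/2, τ] (2×1), C := !![1, 0], J := [0_{(N−M)×M}; I_M] ∈ Matrix (Fin N) (Fin M) ℝ, and let V ∈ Matrix (Fin (N−1)) (Fin N) ℝ have kernel equal to span{1_N}. Define 𝒜 := [[A⊗I_N, β⊗J], [0_{M×2N}, I_M]] ∈ Matrix (Fin (2N+M)) (Fin (2N+M)) ℝ and 𝒞 := [C⊗V, 0_{(N−1)×M}]. Then {v ∈ ℝ^{2N+M} : 𝒞·𝒜ᵏ·v = 0 for all k ∈ ℕ} equals the column space (range) of the (2N+M)×2 matrix [I₂⊗1_N; 0_{M×2}]; in particular the unobservable subspace of the pair (𝒜, 𝒞) is two-dimensional. -/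
/-!
The unobservable subspace is the largest `𝒜`-invariant subspace of `ker 𝒞`, and `𝒞` only sees
`V p` of a state `(p, q, z)` (phases, frequencies, drifts). Applying `𝒜 - 1` once gives
`(τ q + τ²/2 J z, τ J z, 0)`, and twice gives `(τ² J z, 0, 0)`. Hence an unobservable state has
`V p = 0`, `V (J z) = 0` and then `V q = 0`. Since `ker V = span 1_N` while `J z` vanishes on the
first `N - M ≥ 1` coordinates, `J z = 0`, so `z = 0`, and `p`, `q` are common offsets.
Conversely `𝒜` maps `(a 1_N, b 1_N, 0)` to `((a + τ b) 1_N, b 1_N, 0)`, so the common offsets form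
an `𝒜`-invariant subspace of `ker 𝒞`.
-/

open Matrix Kronecker

namespace Matrix

variable {R n ι : Type*} [CommRing R] [Fintype n] [DecidableEq n]

def unobservableSubspace (A : Matrix n n R) (C : Matrix ι n R) : Submodule R (n → R) :=
  ⨅ k : ℕ, LinearMap.ker (C * A ^ k).mulVecLin

variable {A : Matrix n n R} {C : Matrix ι n R} {v : n → R}

theorem mem_unobservableSubspace_iff :
    v ∈ unobservableSubspace A C ↔ ∀ k : ℕ, (C * A ^ k) *ᵥ v = 0 := by
  simp [unobservableSubspace, Submodule.mem_iInf]

theorem mulVec_eq_zero_of_mem_unobservableSubspace (hv : v ∈ unobservableSubspace A C) :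
    C *ᵥ v = 0 := by
  simpa using mem_unobservableSubspace_iff.1 hv 0

theorem mulVec_mem_unobservableSubspace (hv : v ∈ unobservableSubspace A C) :
    A *ᵥ v ∈ unobservableSubspace A C :=
  mem_unobservableSubspace_iff.2 fun k => by
    rw [mulVec_mulVec, Matrix.mul_assoc, ← pow_succ]
    exact mem_unobservableSubspace_iff.1 hv (k + 1)

theorem mem_unobservableSubspace_of_invariant (P : (n → R) → Prop)
    (hC : ∀ v, P v → C *ᵥ v = 0) (hA : ∀ v, P v → P (A *ᵥ v)) (hv : P v) :
    v ∈ unobservableSubspace A C := by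
  rw [mem_unobservableSubspace_iff]
  intro k
  induction k generalizing v with
  | zero => simpa using hC v hv
  | succ k ih => rw [pow_succ, ← Matrix.mul_assoc, ← mulVec_mulVec]; exact ih (hA v hv)

end Matrix

section ClockEnsemble

variable {𝕜 n m ι : Type*}

/-- The index `(0, i)` carries the phase of clock `i` and `(1, i)` its frequency, matching the
Kronecker ordering of `A ⊗ I_N`. -/
def clockState (p q : n → 𝕜) (z : m → 𝕜) : (Fin 2 × n) ⊕ m → 𝕜 :=
  Sum.elim (Function.uncurry ![p, q]) z

theorem clockState_eta (v : (Fin 2 × n) ⊕ m → 𝕜) :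
    clockState (fun i => v (.inl (0, i))) (fun i => v (.inl (1, i))) (v ∘ .inr) = v := by
  ext (⟨k, i⟩ | j) <;> [fin_cases k; skip] <;> rfl

theorem clockState_inj {p q p' q' : n → 𝕜} {z z' : m → 𝕜} :
    clockState p q z = clockState p' q' z' ↔ p = p' ∧ q = q' ∧ z = z' := by
  refine ⟨fun h => ⟨?_, ?_, ?_⟩, by rintro ⟨rfl, rfl, rfl⟩; rfl⟩ <;> ext i
  · exact congrFun h (.inl (0, i))
  · exact congrFun h (.inl (1, i))
  · exact congrFun h (.inr i)

variable [Field 𝕜]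

theorem clockState_sub (p q p' q' : n → 𝕜) (z z' : m → 𝕜) :
    clockState p q z - clockState p' q' z' = clockState (p - p') (q - q') (z - z') := by
  ext (⟨k, i⟩ | j) <;> [fin_cases k; skip] <;> rfl

def commonOffsets : Matrix ((Fin 2 × n) ⊕ m) (Fin 2 × Fin 1) 𝕜 :=
  fromRows ((1 : Matrix (Fin 2) (Fin 2) 𝕜) ⊗ₖ (of fun _ _ => 1 : Matrix n (Fin 1) 𝕜)) 0

theorem commonOffsets_mulVec (w : Fin 2 × Fin 1 → 𝕜) :
    (commonOffsets : Matrix ((Fin 2 × n) ⊕ m) _ 𝕜) *ᵥ w =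
      clockState (fun _ => w (0, 0)) (fun _ => w (1, 0)) 0 := by
  ext (⟨k, i⟩ | j) <;> [fin_cases k; skip] <;>
    simp [commonOffsets, clockState, mulVec, dotProduct, Fintype.sum_prod_type, one_apply]

theorem mem_range_commonOffsets_iff {v : (Fin 2 × n) ⊕ m → 𝕜} :
    v ∈ LinearMap.range (commonOffsets : Matrix ((Fin 2 × n) ⊕ m) _ 𝕜).mulVecLin ↔
      ∃ a b : 𝕜, clockState (fun _ => a) (fun _ => b) 0 = v := by
  simp only [LinearMap.mem_range, mulVecLin_apply, commonOffsets_mulVec]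
  exact ⟨fun ⟨w, hw⟩ => ⟨_, _, hw⟩, fun ⟨a, b, hv⟩ => ⟨fun i => ![a, b] i.1, hv⟩⟩

theorem commonOffsets_mulVecLin_injective [Nonempty n] :
    Function.Injective (commonOffsets : Matrix ((Fin 2 × n) ⊕ m) _ 𝕜).mulVecLin := by
  intro w w' h
  simp only [mulVecLin_apply, commonOffsets_mulVec] at h
  obtain ⟨h₀, h₁, -⟩ := clockState_inj.1 h
  have i := Classical.arbitrary n
  ext ⟨k, l⟩
  fin_cases k <;> fin_cases l
  exacts [congrFun h₀ i, congrFun h₁ i]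

variable [Fintype n] [Fintype m]

def clockObservation (V : Matrix ι n 𝕜) : Matrix (Fin 1 × ι) ((Fin 2 × n) ⊕ m) 𝕜 :=
  fromCols (!![1, 0] ⊗ₖ V) 0

theorem clockObservation_mulVec_eq_zero_iff (V : Matrix ι n 𝕜) (p q : n → 𝕜) (z : m → 𝕜) :
    clockObservation V *ᵥ clockState p q z = 0 ↔ V *ᵥ p = 0 := by
  have h : clockObservation V *ᵥ clockState p q z = fun i => (V *ᵥ p) i.2 := by
    ext ⟨k, i⟩
    simp [clockObservation, clockState, mulVec, dotProduct, Fintype.sum_prod_type]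
  rw [h]
  exact ⟨fun h => funext fun i => congrFun h (0, i), fun h => funext fun i => by simp [h]⟩

variable [DecidableEq n] [DecidableEq m]

def clockTransition (τ : 𝕜) (J : Matrix n m 𝕜) : Matrix ((Fin 2 × n) ⊕ m) ((Fin 2 × n) ⊕ m) 𝕜 :=
  fromBlocks (!![1, τ; 0, 1] ⊗ₖ (1 : Matrix n n 𝕜))
    ((!![τ^2/2; τ] ⊗ₖ J).submatrix id (fun j : m => ((0 : Fin 1), j))) 0 1

theorem clockTransition_mulVec (τ : 𝕜) (J : Matrix n m 𝕜) (p q : n → 𝕜) (z : m → 𝕜) :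
    clockTransition τ J *ᵥ clockState p q z =
      clockState (p + τ • q + (τ ^ 2 / 2) • J *ᵥ z) (q + τ • J *ᵥ z) z := by
  ext (⟨k, i⟩ | j) <;> [fin_cases k; skip] <;>
    simp [clockTransition, clockState, mulVec, dotProduct, Fintype.sum_prod_type, one_apply,
      Finset.mul_sum, mul_assoc]

theorem clockTransition_mulVec_sub_self (τ : 𝕜) (J : Matrix n m 𝕜) (p q : n → 𝕜) (z : m → 𝕜) :
    clockTransition τ J *ᵥ clockState p q z - clockState p q z =
      clockState (τ • q + (τ ^ 2 / 2) • J *ᵥ z) (τ • J *ᵥ z) 0 := by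
  rw [clockTransition_mulVec, clockState_sub]
  congr 1 <;> abel

theorem clockState_mem_unobservableSubspace_iff {τ : 𝕜} (hτ : τ ≠ 0) {J : Matrix n m 𝕜}
    {V : Matrix ι n 𝕜} (hVJ : LinearMap.ker (V * J).mulVecLin = ⊥) {p q : n → 𝕜} {z : m → 𝕜} :
    clockState p q z ∈ unobservableSubspace (clockTransition τ J) (clockObservation V) ↔
      V *ᵥ p = 0 ∧ V *ᵥ q = 0 ∧ z = 0 := by
  set U := unobservableSubspace (clockTransition τ J) (clockObservation V)
  constructor
  · intro hv
    have hU : ∀ v ∈ U, clockTransition τ J *ᵥ v - v ∈ U := fun v hv =>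
      U.sub_mem (mulVec_mem_unobservableSubspace hv) hv
    have hd₁ := hU _ hv
    rw [clockTransition_mulVec_sub_self] at hd₁
    have hd₂ := hU _ hd₁
    rw [clockTransition_mulVec_sub_self] at hd₂
    have obs := fun {p q z} (h : clockState p q z ∈ U) =>
      (clockObservation_mulVec_eq_zero_iff V p q z).1 (mulVec_eq_zero_of_mem_unobservableSubspace h)
    have hz : z = 0 := by
      have := obs hd₂
      simp only [mulVec_zero, smul_zero, add_zero, mulVec_smul, smul_eq_zero, hτ, false_or] at this
      exact (LinearMap.ker_eq_bot'.1 hVJ) z (by simpa [← mulVec_mulVec] using this)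
    subst hz
    have := obs hd₁
    simp only [mulVec_zero, smul_zero, add_zero, mulVec_smul, smul_eq_zero, hτ, false_or] at this
    exact ⟨obs hv, this, rfl⟩
  · rintro ⟨hp, hq, rfl⟩
    refine mem_unobservableSubspace_of_invariant
      (fun v => ∃ p q, V *ᵥ p = 0 ∧ V *ᵥ q = 0 ∧ v = clockState p q 0) ?_ ?_ ⟨p, q, hp, hq, rfl⟩
    · rintro _ ⟨p, q, hp, -, rfl⟩
      exact (clockObservation_mulVec_eq_zero_iff V p q 0).2 hp
    · rintro _ ⟨p, q, hp, hq, rfl⟩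
      refine ⟨p + τ • q, q, ?_, hq, ?_⟩
      · simp [mulVec_add, mulVec_smul, hp, hq]
      · simp [clockTransition_mulVec]

end ClockEnsemble

section BottomInclusion

variable {𝕜 : Type*} [Field 𝕜] {N M : ℕ}

def bottomInclusion (N M : ℕ) : Matrix (Fin N) (Fin M) 𝕜 :=
  of fun i j => if i.val = N - M + j.val then 1 else 0

theorem bottomInclusion_mulVec_apply_add (z : Fin M → 𝕜) (j : Fin M) (h : N - M + j < N) :
    (bottomInclusion N M *ᵥ z) ⟨N - M + j, h⟩ = z j := by
  simp [bottomInclusion, mulVec, dotProduct, Fin.val_inj]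

theorem bottomInclusion_mulVec_apply_zero (hMN : M < N) (z : Fin M → 𝕜) :
    (bottomInclusion N M *ᵥ z) ⟨0, by omega⟩ = 0 := by
  simp only [bottomInclusion, mulVec, dotProduct, of_apply, ite_mul, one_mul, zero_mul]
  exact Finset.sum_eq_zero fun j _ => if_neg (by omega)

theorem ker_mulVecLin_mul_bottomInclusion_eq_bot {ι : Type*} (hMN : M < N)
    {V : Matrix ι (Fin N) 𝕜} (hV : LinearMap.ker V.mulVecLin = 𝕜 ∙ fun _ => 1) :
    LinearMap.ker (V * bottomInclusion N M).mulVecLin = ⊥ := by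
  refine LinearMap.ker_eq_bot'.2 fun z hz => ?_
  have hJz : bottomInclusion N M *ᵥ z ∈ 𝕜 ∙ fun _ => 1 := by
    rw [← hV, LinearMap.mem_ker, mulVecLin_apply, mulVec_mulVec]
    exact hz
  obtain ⟨c, hc⟩ := Submodule.mem_span_singleton.1 hJz
  have hc0 : c = 0 := by
    simpa [← hc] using bottomInclusion_mulVec_apply_zero hMN z
  ext j
  rw [← bottomInclusion_mulVec_apply_add (N := N) z j (by omega), ← hc, hc0]
  simp

end BottomInclusion

theorem stmt_16_general (N M : ℕ) (hMN : M < N)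
    (τ : ℝ) (hτ : τ ≠ 0)
    (A : Matrix (Fin 2) (Fin 2) ℝ) (hA : A = !![1, τ; 0, 1])
    (β : Matrix (Fin 2) (Fin 1) ℝ) (hβ : β = !![τ^2/2; τ])
    (C : Matrix (Fin 1) (Fin 2) ℝ) (hC : C = !![1, 0])
    (J : Matrix (Fin N) (Fin M) ℝ)
    (hJ : J = Matrix.of (fun i j => if i.val = N - M + j.val then 1 else 0))
    (V : Matrix (Fin (N-1)) (Fin N) ℝ)
    (hV : LinearMap.ker V.mulVecLin = Submodule.span ℝ {(fun _ => 1 : Fin N → ℝ)})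
    (onecol : Matrix (Fin N) (Fin 1) ℝ) (honecol : onecol = Matrix.of (fun _ _ => 1))
    (𝒜 : Matrix ((Fin 2 × Fin N) ⊕ Fin M) ((Fin 2 × Fin N) ⊕ Fin M) ℝ)
    (h𝒜 : 𝒜 = Matrix.fromBlocks
      (A ⊗ₖ (1 : Matrix (Fin N) (Fin N) ℝ))
      ((β ⊗ₖ J).submatrix id (fun j : Fin M => ((0 : Fin 1), j)))
      0 (1 : Matrix (Fin M) (Fin M) ℝ))
    (𝒞 : Matrix (Fin 1 × Fin (N-1)) ((Fin 2 × Fin N) ⊕ Fin M) ℝ)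
    (h𝒞 : 𝒞 = Matrix.fromCols (C ⊗ₖ V) 0)
    (Ψ : Matrix ((Fin 2 × Fin N) ⊕ Fin M) (Fin 2 × Fin 1) ℝ)
    (hΨ : Ψ = Matrix.fromRows ((1 : Matrix (Fin 2) (Fin 2) ℝ) ⊗ₖ onecol) 0) :
    {v : ((Fin 2 × Fin N) ⊕ Fin M) → ℝ | ∀ k : ℕ, (𝒞 * 𝒜 ^ k) *ᵥ v = 0} =
      (LinearMap.range Ψ.mulVecLin : Set (((Fin 2 × Fin N) ⊕ Fin M) → ℝ)) ∧
    Module.finrank ℝ (LinearMap.range Ψ.mulVecLin) = 2 := by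
  obtain rfl : 𝒜 = clockTransition τ (bottomInclusion N M) := by rw [h𝒜, hA, hβ, hJ]; rfl
  obtain rfl : 𝒞 = clockObservation V := by rw [h𝒞, hC]; rfl
  obtain rfl : Ψ = commonOffsets := by rw [hΨ, honecol]; rfl
  have hVJ := ker_mulVecLin_mul_bottomInclusion_eq_bot hMN hV
  have hker (p : Fin N → ℝ) : V *ᵥ p = 0 ↔ ∃ a : ℝ, (fun _ => a) = p := by
    rw [← mulVecLin_apply, ← LinearMap.mem_ker, hV, Submodule.mem_span_singleton]
    simp only [funext_iff, Pi.smul_apply, smul_eq_mul, mul_one]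
  have : Nonempty (Fin N) := ⟨⟨0, by omega⟩⟩
  refine ⟨?_, ?_⟩
  · ext v
    rw [← clockState_eta v, Set.mem_ofPred_eq, ← mem_unobservableSubspace_iff, SetLike.mem_coe,
      clockState_mem_unobservableSubspace_iff hτ hVJ, mem_range_commonOffsets_iff]
    simp only [clockState_inj, hker]
    exact ⟨fun ⟨⟨a, ha⟩, ⟨b, hb⟩, hz⟩ => ⟨a, b, ha, hb, hz.symm⟩,
      fun ⟨a, b, ha, hb, hz⟩ => ⟨⟨a, ha⟩, ⟨b, hb⟩, hz.symm⟩⟩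
  · rw [LinearMap.finrank_range_of_inj commonOffsets_mulVecLin_injective]
    simp

/-- Equation (9) of the paper: the unobservable subspace of the mixed clock ensemble
`(𝒜, 𝒞)` equals the column space of `[I₂ ⊗ 1_N; 0]`, hence is two-dimensional. -/
theorem stmt_16 (N M : ℕ) (hN : 2 ≤ N) (hM : 1 ≤ M) (hMN : M < N)
    (τ : ℝ) (hτ : τ ≠ 0)
    (A : Matrix (Fin 2) (Fin 2) ℝ) (hA : A = !![1, τ; 0, 1])
    (β : Matrix (Fin 2) (Fin 1) ℝ) (hβ : β = !![τ^2/2; τ])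
    (C : Matrix (Fin 1) (Fin 2) ℝ) (hC : C = !![1, 0])
    (J : Matrix (Fin N) (Fin M) ℝ)
    (hJ : J = Matrix.of (fun i j => if i.val = N - M + j.val then 1 else 0))
    (V : Matrix (Fin (N-1)) (Fin N) ℝ)
    (hV : LinearMap.ker V.mulVecLin = Submodule.span ℝ {(fun _ => 1 : Fin N → ℝ)})
    (onecol : Matrix (Fin N) (Fin 1) ℝ) (honecol : onecol = Matrix.of (fun _ _ => 1))
    (𝒜 : Matrix ((Fin 2 × Fin N) ⊕ Fin M) ((Fin 2 × Fin N) ⊕ Fin M) ℝ)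
    (h𝒜 : 𝒜 = Matrix.fromBlocks
      (A ⊗ₖ (1 : Matrix (Fin N) (Fin N) ℝ))
      ((β ⊗ₖ J).submatrix id (fun j : Fin M => ((0 : Fin 1), j)))
      0 (1 : Matrix (Fin M) (Fin M) ℝ))
    (𝒞 : Matrix (Fin 1 × Fin (N-1)) ((Fin 2 × Fin N) ⊕ Fin M) ℝ)
    (h𝒞 : 𝒞 = Matrix.fromCols (C ⊗ₖ V) 0)
    (Ψ : Matrix ((Fin 2 × Fin N) ⊕ Fin M) (Fin 2 × Fin 1) ℝ)
    (hΨ : Ψ = Matrix.fromRows ((1 : Matrix (Fin 2) (Fin 2) ℝ) ⊗ₖ onecol) 0) :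
    {v : ((Fin 2 × Fin N) ⊕ Fin M) → ℝ | ∀ k : ℕ, (𝒞 * 𝒜 ^ k) *ᵥ v = 0} =
      (LinearMap.range Ψ.mulVecLin : Set (((Fin 2 × Fin N) ⊕ Fin M) → ℝ)) ∧
    Module.finrank ℝ (LinearMap.range Ψ.mulVecLin) = 2 :=
  stmt_16_general N M hMN τ hτ A hA β hβ C hC J hJ V hV onecol honecol 𝒜 h𝒜 𝒞 h𝒞 Ψ hΨ
end

section
/- Let τ ∈ ℝ with τ ≠ 0, γ ∈ ℝ, A := !![1, τ; 0, 1], β := ![τ²/2, τ] (2×1), B := ![τ, 1] (2×1), F := !![γ/τ, 1] (1×2) and D := τ/2. Then: (i) A − B·F = !![1−γ, 0; −γ/τ, 0]; (ii) β − D·B = ![0, τ/2]; and (iii) for every N ≥ 2, M ≥ 1, every matrix VJ ∈ Matrix (Fin (N−1)) (Fin M) ℝ and all vectors ξᵖ, ξᶠ, eᵖ, eᶠ ∈ ℝ^{N−1}, ν, e_ν ∈ ℝᴹ, the first N−1 components of ((A−BF)⊗I_{N−1})·[ξᵖ; ξᶠ] + ((β−DB)⊗VJ)·ν + ((BF)⊗I_{N−1})·[eᵖ;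 eᶠ] + ((DB)⊗VJ)·e_ν equal (1−γ)ξᵖ + γeᵖ + τeᶠ + (τ²/2)·VJ·e_ν. -/
open Matrix Kronecker

/-! A Kronecker product `K ⊗ I` acts on a block vector `[x₀; x₁]` by `K` on the blocks, so the
phase block only sees the first rows of `A − BF`, `β − DB`, `BF` and `DB`. These are `[1 − γ, 0]`,
`0`, `[γ, τ]` and `τ²/2`, because `τ · (γ/τ) = γ` and `τ²/2 − (τ/2) τ = 0`. -/

namespace Matrix

variable {R l m n o p : Type*} [CommSemiring R] [Fintype m] [Fintype o]

theorem kronecker_one_mulVec_apply [Fintype n] [DecidableEq n] (K : Matrix l m R) (x : m → n → R)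
    (i : l) (j : n) :
    ((K ⊗ₖ (1 : Matrix n n R)) *ᵥ fun q => x q.1 q.2) (i, j) = ∑ k, K i k * x k j := by
  simp only [mulVec, dotProduct, Fintype.sum_prod_type, kroneckerMap_apply, one_apply,
    mul_ite, mul_one, mul_zero, ite_mul, zero_mul, Finset.sum_ite_eq, Finset.mem_univ, if_true]

theorem kronecker_submatrix_mulVec_apply (P : Matrix l p R) (V : Matrix n o R) (c : p)
    (x : o → R) (i : l) (j : n) :
    (((P ⊗ₖ V).submatrix id fun b => (c, b)) *ᵥ x) (i, j) = P i c * (V *ᵥ x) j := by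
  simp only [mulVec, dotProduct, submatrix_apply, id_eq, kroneckerMap_apply, Finset.mul_sum,
    mul_assoc]

end Matrix

section FeedbackGains

variable {τ : ℝ} (γ : ℝ)

theorem feedback_mul_gain (hτ : τ ≠ 0) :
    !![τ; 1] * !![γ / τ, 1] = !![γ, τ; γ / τ, 1] := by
  ext i j
  fin_cases i <;> fin_cases j <;> simp [mul_div_cancel₀ γ hτ]

theorem closedLoop_eq (hτ : τ ≠ 0) :
    !![1, τ; 0, 1] - !![τ; 1] * !![γ / τ, 1] = !![1 - γ, 0; -(γ / τ), 0] := by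
  rw [feedback_mul_gain γ hτ]
  ext i j
  fin_cases i <;> fin_cases j <;> simp

theorem drift_sub_smul_gain : !![τ ^ 2 / 2; τ] - (τ / 2) • !![τ; 1] = !![0; τ / 2] := by
  ext i j
  fin_cases i <;> fin_cases j <;> simp <;> ring

end FeedbackGains

/-- Theorem 2 of the paper (closed-loop identities for the feedback gains
`F = [γ/τ, 1]`, `D = τ/2`): `A − BF`, `β − DB`, and the resulting dynamics of the phase
block of the observable synchronization error. -/
theorem stmt_18 (τ : ℝ) (hτ : τ ≠ 0) (γ : ℝ)
    (A : Matrix (Fin 2) (Fin 2) ℝ) (hA : A = !![1, τ; 0, 1])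
    (β : Matrix (Fin 2) (Fin 1) ℝ) (hβ : β = !![τ^2/2; τ])
    (B : Matrix (Fin 2) (Fin 1) ℝ) (hB : B = !![τ; 1])
    (F : Matrix (Fin 1) (Fin 2) ℝ) (hF : F = !![γ/τ, 1])
    (D : ℝ) (hD : D = τ/2) :
    A - B * F = !![1 - γ, 0; -(γ/τ), 0] ∧
    β - D • B = !![0; τ/2] ∧
    (∀ (N M : ℕ), 2 ≤ N → 1 ≤ M →
      ∀ (VJ : Matrix (Fin (N-1)) (Fin M) ℝ) (ξp ξf ep ef : Fin (N-1) → ℝ)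
        (ν eν : Fin M → ℝ),
      (fun j : Fin (N-1) =>
        (((A - B * F) ⊗ₖ (1 : Matrix (Fin (N-1)) (Fin (N-1)) ℝ)) *ᵥ
            (fun pr => ![ξp, ξf] pr.1 pr.2)
          + (((β - D • B) ⊗ₖ VJ).submatrix id (fun jm : Fin M => ((0 : Fin 1), jm))) *ᵥ ν
          + ((B * F) ⊗ₖ (1 : Matrix (Fin (N-1)) (Fin (N-1)) ℝ)) *ᵥ
            (fun pr => ![ep, ef] pr.1 pr.2)
          + (((D • B) ⊗ₖ VJ).submatrix id (fun jm : Fin M => ((0 : Fin 1), jm))) *ᵥ eν)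
        ((0 : Fin 2), j))
      = (1 - γ) • ξp + γ • ep + τ • ef + (τ^2/2) • (VJ *ᵥ eν)) := by
  subst hA hβ hB hF hD
  refine ⟨closedLoop_eq γ hτ, drift_sub_smul_gain, ?_⟩
  intro N M _ _ VJ ξp ξf ep ef ν eν
  rw [closedLoop_eq γ hτ, drift_sub_smul_gain, feedback_mul_gain γ hτ]
  funext j
  simp only [Pi.add_apply, Pi.smul_apply, kronecker_one_mulVec_apply,
    kronecker_submatrix_mulVec_apply, Fin.sum_univ_two]
  simp only [Fin.isValue, of_apply, cons_val', cons_val_zero, cons_val_fin_one,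
    Nat.succ_eq_add_one, Nat.reduceAdd, cons_val_one, zero_mul, add_zero, Matrix.smul_apply,
    smul_eq_mul]
  ring
end

section
/- Let N ≥ 2, M ≥ 1, τ ∈ ℝ with τ ≠ 0, and γ ∈ ℝ with |1−γ| < 1. Let A := !![1, τ; 0, 1], β := ![τ²/2, τ] (2×1), B := ![τ, 1] (2×1), F := !![γ/τ, 1] (1×2), D := τ/2, J := [0_{(N−M)×M}; I_M], and let V, W, q, V⁺ satisfy ker V = span{1_N}, W of full column rank, qᵀW = 0, qᵀ1_N = 1, V⁺ := W(VW)⁻¹. Suppose x : ℕ → ℝ^{2N} and z : ℕ → ℝᴹ satisfy the noise-free closed-loop dynamics x(k+1) = (A⊗I_N)x(k) + (β⊗J)z(k) + (B⊗I_N)u(k) and z(k+1) = z(k), with u(k) := −V⁺·([F⊗I_{N−1}, D·(VJ)]·[(I₂⊗V)x(k); z(k)]). Then, writing p(k) ∈ ℝᴺ for the first N components of x(k), one has p(k) − (qᵀp(k))·1_N → 0 as k → ∞. -/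
open Matrix Kronecker

/-- Deterministic version of Theorem 2 of the paper: under the explicit ensemble mean
synchronization control with gains `F = [γ/τ, 1]`, `D = τ/2` and `|1−γ| < 1`, the phase
deviation of every clock converges to the `q`-weighted ensemble mean phase. -/
theorem stmt_19 (N M : ℕ) (hN : 2 ≤ N) (hM : 1 ≤ M)
    (τ : ℝ) (hτ : τ ≠ 0) (γ : ℝ) (hγ : |1 - γ| < 1)
    (A : Matrix (Fin 2) (Fin 2) ℝ) (hA : A = !![1, τ; 0, 1])
    (β : Matrix (Fin 2) (Fin 1) ℝ) (hβ : β = !![τ^2/2; τ])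
    (B : Matrix (Fin 2) (Fin 1) ℝ) (hB : B = !![τ; 1])
    (F : Matrix (Fin 1) (Fin 2) ℝ) (hF : F = !![γ/τ, 1])
    (D : ℝ) (hD : D = τ/2)
    (J : Matrix (Fin N) (Fin M) ℝ)
    (hJ : J = Matrix.of (fun i j => if i.val = N - M + j.val then 1 else 0))
    (V : Matrix (Fin (N-1)) (Fin N) ℝ)
    (hV : LinearMap.ker V.mulVecLin = Submodule.span ℝ {(fun _ => 1 : Fin N → ℝ)})
    (W : Matrix (Fin N) (Fin (N-1)) ℝ)
    (hW : LinearIndependent ℝ (fun j : Fin (N-1) => fun i : Fin N => W i j))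
    (q : Fin N → ℝ) (hqW : Matrix.vecMul q W = 0)
    (hq1 : q ⬝ᵥ (fun _ => 1) = 1)
    (Vplus : Matrix (Fin N) (Fin (N-1)) ℝ) (hVplus : Vplus = W * (V * W)⁻¹)
    (x : ℕ → Fin 2 × Fin N → ℝ) (z : ℕ → Fin M → ℝ)
    (φ : ℕ → Fin (N-1) → ℝ) (u : ℕ → Fin N → ℝ)
    (hφ : ∀ k, φ k = fun j =>
      ((F ⊗ₖ (1 : Matrix (Fin (N-1)) (Fin (N-1)) ℝ)) *ᵥ
        (((1 : Matrix (Fin 2) (Fin 2) ℝ) ⊗ₖ V) *ᵥ x k)) ((0 : Fin 1), j)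
      + D * ((V * J) *ᵥ z k) j)
    (hu : ∀ k, u k = -(Vplus *ᵥ φ k))
    (hx : ∀ k, x (k+1) = (A ⊗ₖ (1 : Matrix (Fin N) (Fin N) ℝ)) *ᵥ x k
      + ((β ⊗ₖ J).submatrix id (fun j : Fin M => ((0 : Fin 1), j))) *ᵥ z k
      + ((B ⊗ₖ (1 : Matrix (Fin N) (Fin N) ℝ)).submatrix id
          (fun i : Fin N => ((0 : Fin 1), i))) *ᵥ u k)
    (hz : ∀ k, z (k+1) = z k)
    (p : ℕ → Fin N → ℝ) (hp : ∀ k, p k = fun i => x k ((0 : Fin 2), i)) :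
    Filter.Tendsto (fun k => p k - (q ⬝ᵥ p k) • (fun _ => (1:ℝ)))
      Filter.atTop (nhds 0) := by
  -- V*W is invertible
  have hdet : IsUnit (V * W).det := by
    rw [isUnit_iff_ne_zero]
    intro h0
    obtain ⟨c, hc0, hc⟩ := (Matrix.exists_mulVec_eq_zero_iff).2 h0
    have hWc : W *ᵥ c ∈ LinearMap.ker V.mulVecLin := by
      rw [LinearMap.mem_ker, Matrix.mulVecLin_apply, Matrix.mulVec_mulVec, hc]
    rw [hV, Submodule.mem_span_singleton] at hWc
    obtain ⟨a, ha⟩ := hWc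
    have hqa : q ⬝ᵥ (W *ᵥ c) = a := by
      rw [← ha, dotProduct_smul, hq1, smul_eq_mul, mul_one]
    rw [Matrix.dotProduct_mulVec, hqW, zero_dotProduct] at hqa
    have hWc0 : W *ᵥ c = 0 := by rw [← ha, ← hqa, zero_smul]
    apply hc0
    have hli := Fintype.linearIndependent_iff.1 hW c ?_
    · funext j; exact hli j
    · funext i
      simpa [Matrix.mulVec, dotProduct, mul_comm] using congrFun hWc0 i
  have hVVp : V * Vplus = 1 := by
    rw [hVplus, ← Matrix.mul_assoc, Matrix.mul_nonsing_inv _ hdet]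
  have hone : V *ᵥ (fun _ => (1:ℝ)) = 0 := by
    have h1 : (fun _ => (1:ℝ) : Fin N → ℝ) ∈ LinearMap.ker V.mulVecLin := by
      rw [hV]; exact Submodule.mem_span_singleton_self _
    simpa using h1
  have hqVp : Matrix.vecMul q Vplus = 0 := by
    rw [hVplus, ← Matrix.vecMul_vecMul, hqW, Matrix.zero_vecMul]
  -- key identity
  have hkey : ∀ y : Fin N → ℝ,
      y - (q ⬝ᵥ y) • (fun _ => (1:ℝ)) = Vplus *ᵥ (V *ᵥ y) := by
    intro y
    have h2 : V *ᵥ (Vplus *ᵥ (V *ᵥ y)) = V *ᵥ y := by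
      rw [Matrix.mulVec_mulVec, hVVp, Matrix.one_mulVec]
    have hVd : V *ᵥ (y - (q ⬝ᵥ y) • (fun _ => (1:ℝ)) - Vplus *ᵥ (V *ᵥ y)) = 0 := by
      rw [Matrix.mulVec_sub, Matrix.mulVec_sub, Matrix.mulVec_smul, hone, h2]
      simp
    have hmem : (y - (q ⬝ᵥ y) • (fun _ => (1:ℝ)) - Vplus *ᵥ (V *ᵥ y))
        ∈ LinearMap.ker V.mulVecLin := by simpa using hVd
    rw [hV, Submodule.mem_span_singleton] at hmem
    obtain ⟨a, ha⟩ := hmem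
    have hqd : q ⬝ᵥ (y - (q ⬝ᵥ y) • (fun _ => (1:ℝ)) - Vplus *ᵥ (V *ᵥ y)) = 0 := by
      rw [dotProduct_sub, dotProduct_sub, dotProduct_smul, hq1,
        Matrix.dotProduct_mulVec, hqVp, zero_dotProduct]
      simp
    have h3 := congrArg (fun v => q ⬝ᵥ v) ha
    simp only at h3
    rw [hqd] at h3
    have ha0 : a = 0 := by
      simpa [dotProduct_smul, hq1] using h3
    rw [ha0, zero_smul] at ha
    exact sub_eq_zero.mp ha.symm
  -- component computations of the dynamics
  have hA1 : ∀ (y : Fin 2 × Fin N → ℝ) (i : Fin N),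
      ((A ⊗ₖ (1 : Matrix (Fin N) (Fin N) ℝ)) *ᵥ y) ((0 : Fin 2), i)
        = y (0, i) + τ * y (1, i) := by
    intro y i
    simp [hA, Matrix.mulVec, dotProduct, Fintype.sum_prod_type, Fin.sum_univ_two,
      Matrix.one_apply, mul_ite, Finset.sum_ite_eq']
  have hβ1 : ∀ (w : Fin M → ℝ) (i : Fin N),
      (((β ⊗ₖ J).submatrix id (fun j : Fin M => ((0 : Fin 1), j))) *ᵥ w) ((0 : Fin 2), i)
        = (τ^2/2) * (J *ᵥ w) i := by
    intro w i
    simp [hβ, Matrix.mulVec, dotProduct, Finset.mul_sum, mul_assoc]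
  have hB1 : ∀ (w : Fin N → ℝ) (i : Fin N),
      (((B ⊗ₖ (1 : Matrix (Fin N) (Fin N) ℝ)).submatrix id
          (fun i : Fin N => ((0 : Fin 1), i))) *ᵥ w) ((0 : Fin 2), i)
        = τ * w i := by
    intro w i
    simp [hB, Matrix.mulVec, dotProduct, Matrix.one_apply, mul_ite, Finset.sum_ite_eq']
  have h1V : ∀ (k : ℕ) (a : Fin 2) (j : Fin (N-1)),
      ((((1 : Matrix (Fin 2) (Fin 2) ℝ) ⊗ₖ V) *ᵥ x k)) (a, j)
        = (V *ᵥ fun i => x k (a, i)) j := by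
    intro k a j
    fin_cases a <;>
      simp [Matrix.mulVec, dotProduct, Fintype.sum_prod_type, Fin.sum_univ_two,
        Matrix.one_apply]
  have hF0 : ∀ (y : Fin 2 × Fin (N-1) → ℝ) (j : Fin (N-1)),
      ((F ⊗ₖ (1 : Matrix (Fin (N-1)) (Fin (N-1)) ℝ)) *ᵥ y) ((0:Fin 1), j)
        = (γ/τ) * y (0, j) + y (1, j) := by
    intro y j
    simp [hF, Matrix.mulVec, dotProduct, Fintype.sum_prod_type, Fin.sum_univ_two,
      Matrix.one_apply, mul_ite, ite_mul, Finset.sum_ite_eq', Finset.sum_ite_eq]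
  have hφ' : ∀ k, φ k = fun j =>
      (γ/τ) * (V *ᵥ p k) j
      + (V *ᵥ fun i => x k ((1:Fin 2), i)) j
      + (τ/2) * ((V * J) *ᵥ z k) j := by
    intro k; funext j
    rw [hφ]
    simp only [hD]
    rw [hF0, h1V, h1V, hp]
  have hprec : ∀ k, V *ᵥ p (k+1) = (1-γ) • (V *ᵥ p k) := by
    intro k
    have hpc : p (k+1) = p k + τ • (fun i => x k ((1:Fin 2), i))
        + (τ^2/2) • (J *ᵥ z k) + τ • u k := by
      funext i
      rw [hp]
      simp only [Pi.add_apply, Pi.smul_apply, smul_eq_mul]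
      rw [hx k]
      simp only [Pi.add_apply]
      rw [hA1, hβ1, hB1, hp]
    have hVu : V *ᵥ u k = -(φ k) := by
      rw [hu, Matrix.mulVec_neg, Matrix.mulVec_mulVec, hVVp, Matrix.one_mulVec]
    rw [hpc, Matrix.mulVec_add, Matrix.mulVec_add, Matrix.mulVec_add,
      Matrix.mulVec_smul, Matrix.mulVec_smul, Matrix.mulVec_smul,
      Matrix.mulVec_mulVec, hVu, hφ' k]
    funext j
    simp only [Pi.add_apply, Pi.smul_apply, Pi.neg_apply, smul_eq_mul]
    field_simp
    ring
  have hind : ∀ k, V *ᵥ p k = (1-γ)^k • (V *ᵥ p 0) := by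
    intro k
    induction k with
    | zero => simp
    | succ n ih => rw [hprec, ih, pow_succ', smul_smul]
  have heq : ∀ k, p k - (q ⬝ᵥ p k) • (fun _ => (1:ℝ))
      = (1-γ)^k • (Vplus *ᵥ (V *ᵥ p 0)) := by
    intro k
    rw [hkey, hind, Matrix.mulVec_smul]
  have ht := (tendsto_pow_atTop_nhds_zero_of_abs_lt_one hγ).smul_const
    (Vplus *ᵥ (V *ᵥ p 0))
  rw [zero_smul] at ht
  exact Filter.Tendsto.congr (fun k => (heq k).symm) ht
end
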